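/- arXiv:2507.15417 — 9 statements merged into one kernel-verified Lean document; each statement's English description precedes it below -/
import Mathlib

section
/- Let X be a set and d : X × X → ℝ a symmetric function satisfying the strong (bottleneck/ultrametric-type) triangle inequality d(a,b) ≤ max(d(a,c), d(c,b)) for all a,b,c ∈ X. Then for all points u, v, w, u', v', w' ∈ X, one has max{d(u,u'), d(u',v'), d(v',v)} + max{d(v,v'), d(v',w'), d(w',w)} ≥ d(v,v') + max{d(u,u'), d(u',w'), d(w',w)}. -/
/-! The bottleneck distance `x_{uv}^c` of the paper is `bottleneck d u u_c v_c v`, the largest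
step of the path `u, u_c, v_c, v`. Let `A` and `B` be the two bottleneck distances on the left.
Both contain the step `d(v, v')` (the first one by symmetry), so `d(v, v') ≤ min A B`; and by the
strong triangle inequality at `v'` every step of the path `u, u', w', w` is at most `max A B`.
Adding the two bounds and using `min A B + max A B = A + B` gives the inequality. -/

theorem add_le_add_of_le_min_of_le_max {α : Type*} [LinearOrder α] [AddCommSemigroup α]
    [AddLeftMono α] {a b c m : α} (hc : c ≤ min a b) (hm : m ≤ max a b) : c + m ≤ a + b :=
  min_add_max a b ▸ add_le_add hc hm

section Bottleneck

variable {X α : Type*} [LinearOrder α] (d : X × X → α)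

def bottleneck (a a' b' b : X) : α := max (d (a, a')) (max (d (a', b')) (d (b', b)))

theorem bottleneck_le_max_bottleneck (htri : ∀ a b c : X, d (a, b) ≤ max (d (a, c)) (d (c, b)))
    (u u' v' v w' w : X) :
    bottleneck d u u' w' w ≤ max (bottleneck d u u' v' v) (bottleneck d v v' w' w) := by
  have hmid := htri u' w' v'
  grind [bottleneck]

end Bottleneck

/-- For a symmetric function `d` satisfying the strong (bottleneck/ultrametric-type)
triangle inequality, the bottleneck distances satisfy the strengthened metric inequality. -/
theorem bottleneck_strengthened_triangle {X : Type*} (d : X × X → ℝ)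
    (hsymm : ∀ a b : X, d (a, b) = d (b, a))
    (htri : ∀ a b c : X, d (a, b) ≤ max (d (a, c)) (d (c, b))) :
    ∀ u v w u' v' w' : X,
      max (d (u, u')) (max (d (u', v')) (d (v', v))) +
        max (d (v, v')) (max (d (v', w')) (d (w', w))) ≥
      d (v, v') + max (d (u, u')) (max (d (u', w')) (d (w', w))) := by
  intro u v w u' v' w'
  have hvv' : d (v, v') ≤ min (bottleneck d u u' v' v) (bottleneck d v v' w' w) :=
    le_min (hsymm v v' ▸ le_max_of_le_right (le_max_right _ _)) (le_max_left _ _)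
  exact add_le_add_of_le_min_of_le_max hvv' (bottleneck_le_max_bottleneck d htri u u' v' v w' w)
end

section
/- Let V be a finite set, L a set of colors, 0, γ two distinct elements not in L, and φ, Φ¹, Φ² : V × V → L ∪ {0, γ} symmetric functions whose value is 0 exactly on the diagonal. Let K ⊆ V, and suppose that every pair (u,v) with Φ¹(u,v) ≠ Φ²(u,v) has u ∈ K or v ∈ K. Then, with obj(Φ) = |{ {u,v} : u ≠ v, φ(u,v) ≠ Φ(u,v) }| and d_0^K(f,g) = |{v ∈ V : f(v) ≠ g(v)}| + |{v ∈ V \ K : f(v) ≠ g(v)}|, one has obj(Φ¹) − obj(Φ²) = (1/2) · Σ_{u ∈ K} ( d_0^K(φ_u, Φ¹_u) − d_0^K(φ_u, Φ²_u) ) as an identity of integers. -/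
/-!
Let `Gᵢ` be the graph of pairs of distinct vertices on which `φ` and `Φⁱ` disagree. Then
`obj(Φⁱ)` is its number of edges and, as all three functions vanish on the diagonal,
`d_0(φ_u, Φⁱ_u)` is the degree of `u` in `Gᵢ`. By the handshake lemma,
`2 (obj(Φ¹) - obj(Φ²)) = Σ_u (deg₁ u - deg₂ u)`. Since `G₁` and `G₂` agree on pairs outside `K`,
a vertex `u ∉ K` contributes only through its neighbours in `K`; by symmetry these contributions
are the edges between `K` and its complement, read from their endpoint in `K`, which is exactly
what the doubled count of `V \ K` in `d_0^K` adds.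
-/

open scoped Classical

open Finset

theorem sum_sum_eq_sum_add_sum_compl_of_symm {V M : Type*} [Fintype V] [AddCommMonoid M]
    (a : V → V → M) (K : Finset V) (hsymm : ∀ u v, a u v = a v u)
    (hzero : ∀ u v, u ∉ K → v ∉ K → a u v = 0) :
    ∑ u, ∑ v, a u v = ∑ u ∈ K, (∑ v, a u v + ∑ v ∈ Kᶜ, a u v) := by
  have houter : ∑ u ∈ Kᶜ, ∑ v, a u v = ∑ u ∈ K, ∑ v ∈ Kᶜ, a u v := by
    calc ∑ u ∈ Kᶜ, ∑ v, a u v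
        = ∑ u ∈ Kᶜ, ∑ v ∈ K, a u v := by
          refine sum_congr rfl fun u hu => ?_
          rw [← sum_add_sum_compl K, sum_eq_zero fun v hv =>
            hzero u v (mem_compl.mp hu) (mem_compl.mp hv), add_zero]
      _ = ∑ v ∈ K, ∑ u ∈ Kᶜ, a v u := by
          rw [sum_comm]; simp only [hsymm]
  rw [← sum_add_sum_compl K, houter, sum_add_distrib]

namespace SimpleGraph

theorem card_filter_adj_sub_card_filter_adj {V : Type*} (G₁ G₂ : SimpleGraph V) (s : Finset V)
    (u : V) :
    (#(s.filter (G₁.Adj u)) : ℤ) - #(s.filter (G₂.Adj u)) =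
      ∑ v ∈ s, ((if G₁.Adj u v then 1 else 0) - if G₂.Adj u v then 1 else 0) := by
  simp only [card_filter, Nat.cast_sum, Nat.cast_ite, Nat.cast_one, Nat.cast_zero,
    sum_sub_distrib]

theorem two_mul_card_edgeFinset_sub {V : Type*} [Fintype V] {G₁ G₂ : SimpleGraph V}
    (K : Finset V) (hK : ∀ u v, u ∉ K → v ∉ K → (G₁.Adj u v ↔ G₂.Adj u v)) :
    2 * ((#G₁.edgeFinset : ℤ) - #G₂.edgeFinset) =
      ∑ u ∈ K, (((G₁.degree u + #(Kᶜ.filter (G₁.Adj u)) : ℕ) : ℤ) -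
        ((G₂.degree u + #(Kᶜ.filter (G₂.Adj u)) : ℕ) : ℤ)) := by
  set a : V → V → ℤ := fun u v => (if G₁.Adj u v then 1 else 0) - if G₂.Adj u v then 1 else 0
  have hdegree : ∀ u, (G₁.degree u : ℤ) - G₂.degree u = ∑ v, a u v := fun u => by
    simp only [← card_neighborFinset_eq_degree, neighborFinset_eq_filter]
    exact card_filter_adj_sub_card_filter_adj G₁ G₂ univ u
  have hsymm : ∀ u v, a u v = a v u := fun u v => by simp only [a, G₁.adj_comm, G₂.adj_comm]
  have hzero : ∀ u v, u ∉ K → v ∉ K → a u v = 0 := fun u v hu hv => by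
    simp only [a, hK u v hu hv, sub_self]
  calc 2 * ((#G₁.edgeFinset : ℤ) - #G₂.edgeFinset)
      = ∑ u, ((G₁.degree u : ℤ) - G₂.degree u) := by
        simp only [sum_sub_distrib, ← Nat.cast_sum, sum_degrees_eq_twice_card_edges]
        push_cast; ring
    _ = ∑ u ∈ K, (∑ v, a u v + ∑ v ∈ Kᶜ, a u v) := by
        simp only [hdegree]; exact sum_sum_eq_sum_add_sum_compl_of_symm a K hsymm hzero
    _ = _ := by
        refine sum_congr rfl fun u _ => ?_
        rw [← hdegree, ← card_filter_adj_sub_card_filter_adj]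
        push_cast; ring

end SimpleGraph

section Disagreement

variable {V α : Type*} {φ Φ : V → V → α}

def disagreementGraph (φ Φ : V → V → α) : SimpleGraph V :=
  SimpleGraph.fromRel fun u v => φ u v ≠ Φ u v

theorem disagreementGraph_adj_iff (hφ : ∀ u v, φ u v = φ v u) (hΦ : ∀ u v, Φ u v = Φ v u)
    {u v : V} : (disagreementGraph φ Φ).Adj u v ↔ u ≠ v ∧ φ u v ≠ Φ u v := by
  simp only [disagreementGraph, SimpleGraph.fromRel_adj, hφ v u, hΦ v u, or_self]

theorem disagreementGraph_adj_iff_of_diag (hφ : ∀ u v, φ u v = φ v u)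
    (hΦ : ∀ u v, Φ u v = Φ v u) (hdiag : ∀ u, φ u u = Φ u u) {u v : V} :
    (disagreementGraph φ Φ).Adj u v ↔ φ u v ≠ Φ u v := by
  rw [disagreementGraph_adj_iff hφ hΦ]
  refine ⟨And.right, fun h => ⟨?_, h⟩⟩
  rintro rfl
  exact h (hdiag u)

theorem edgeFinset_disagreementGraph [Fintype V] [DecidableEq α] (hφ : ∀ u v, φ u v = φ v u)
    (hΦ : ∀ u v, Φ u v = Φ v u) :
    (disagreementGraph φ Φ).edgeFinset =
      univ.filter fun e : Sym2 V => ∃ u v : V, e = s(u, v) ∧ u ≠ v ∧ φ u v ≠ Φ u v := by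
  ext e
  simp only [SimpleGraph.mem_edgeFinset, mem_filter, mem_univ, true_and]
  constructor
  · induction e using Sym2.ind with
    | _ u v => exact fun huv => ⟨u, v, rfl, (disagreementGraph_adj_iff hφ hΦ).1 huv⟩
  · rintro ⟨u, v, rfl, huv⟩
    exact (disagreementGraph_adj_iff hφ hΦ).2 huv

end Disagreement

/-- if the two symmetric clusterings `Φ¹` and `Φ²` differ only on pairs meeting
a set `K`, then the difference of their disagreement costs against `φ` equals half the sum
over `u ∈ K` of the differences of the weighted local costs `d_0^K`, where
`d_0^K(f,g) = |{v : f v ≠ g v}| + |{v ∉ K : f v ≠ g v}|` (vertices outside `K` counted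
twice). The codomain `L ∪ {0, γ}` is modeled by `Option (Option L)` with `none = 0`,
`some none = γ`. -/
theorem obj_diff_eq_half_sum_d0K {V L : Type*} [Fintype V]
    (φ Φ₁ Φ₂ : V → V → Option (Option L))
    (hφsymm : ∀ u v : V, φ u v = φ v u)
    (hΦ₁symm : ∀ u v : V, Φ₁ u v = Φ₁ v u)
    (hΦ₂symm : ∀ u v : V, Φ₂ u v = Φ₂ v u)
    (hφdiag : ∀ u v : V, φ u v = none ↔ u = v)
    (hΦ₁diag : ∀ u v : V, Φ₁ u v = none ↔ u = v)
    (hΦ₂diag : ∀ u v : V, Φ₂ u v = none ↔ u = v)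
    (K : Finset V)
    (hK : ∀ u v : V, Φ₁ u v ≠ Φ₂ u v → u ∈ K ∨ v ∈ K) :
    (((Finset.univ.filter fun e : Sym2 V =>
          ∃ u v : V, e = s(u, v) ∧ u ≠ v ∧ φ u v ≠ Φ₁ u v).card : ℝ)) -
      ((Finset.univ.filter fun e : Sym2 V =>
          ∃ u v : V, e = s(u, v) ∧ u ≠ v ∧ φ u v ≠ Φ₂ u v).card : ℝ) =
    (1 / 2) * ∑ u ∈ K,
      ((((Finset.univ.filter fun v : V => φ u v ≠ Φ₁ u v).card +
          (Finset.univ.filter fun v : V => v ∉ K ∧ φ u v ≠ Φ₁ u v).card : ℕ) : ℝ) -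
        (((Finset.univ.filter fun v : V => φ u v ≠ Φ₂ u v).card +
          (Finset.univ.filter fun v : V => v ∉ K ∧ φ u v ≠ Φ₂ u v).card : ℕ) : ℝ)) := by
  have hadj : ∀ {Φ : V → V → Option (Option L)}, (∀ u v, Φ u v = Φ v u) →
      (∀ u v, Φ u v = none ↔ u = v) → ∀ {u v},
        (disagreementGraph φ Φ).Adj u v ↔ φ u v ≠ Φ u v := fun hΦsymm hΦdiag =>
    disagreementGraph_adj_iff_of_diag hφsymm hΦsymm fun u =>
      ((hφdiag u u).2 rfl).trans ((hΦdiag u u).2 rfl).symm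
  have hagree : ∀ u v, u ∉ K → v ∉ K →
      ((disagreementGraph φ Φ₁).Adj u v ↔ (disagreementGraph φ Φ₂).Adj u v) := by
    intro u v hu hv
    have : Φ₁ u v = Φ₂ u v := by_contra fun h => (hK u v h).elim hu hv
    rw [hadj hΦ₁symm hΦ₁diag, hadj hΦ₂symm hΦ₂diag, this]
  have hcompl : ∀ (p : V → Prop) [DecidablePred p],
      Kᶜ.filter p = univ.filter fun v => v ∉ K ∧ p v := fun p _ => by
    ext; simp
  have key := congrArg (Int.cast : ℤ → ℝ) (SimpleGraph.two_mul_card_edgeFinset_sub K hagree)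
  simp only [← SimpleGraph.card_neighborFinset_eq_degree, SimpleGraph.neighborFinset_eq_filter,
    hadj hΦ₁symm hΦ₁diag, hadj hΦ₂symm hΦ₂diag, edgeFinset_disagreementGraph hφsymm hΦ₁symm,
    edgeFinset_disagreementGraph hφsymm hΦ₂symm, hcompl] at key
  push_cast at key ⊢
  linarith
end

section
/- Let S, t ∈ ℝ with 0 ≤ t ≤ S ≤ 1. Then S/(2(2−S)) + (3−2t)·t/(2(2−t)) ≤ S. -/
/-! The charge `h x = (3 - 2x) x / (2(2 - x))` equals `x + 1/2 - 1/(2 - x)`, so it is nondecreasing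
as long as `(2 - x)² ≥ 1`, i.e. on `x ≤ 1`; and `h S + S/(2(2 - S)) = S` identically. Hence
`S/(2(2 - S)) + h t ≤ S/(2(2 - S)) + h S = S` for `t ≤ S ≤ 1`. -/

namespace NegativeEdge

noncomputable def charge (x : ℝ) : ℝ := (3 - 2 * x) * x / (2 * (2 - x))

lemma charge_eq {x : ℝ} (hx : x ≠ 2) : charge x = x + 1 / 2 - 1 / (2 - x) := by
  have : 2 - x ≠ 0 := sub_ne_zero.2 hx.symm
  unfold charge
  field_simp
  ring

lemma one_div_sub_one_div_le {a b : ℝ} (hab : a ≤ b) (hb : b ≤ 1) :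
    1 / (2 - b) - 1 / (2 - a) ≤ b - a := by
  have ha' : 0 < 2 - a := by linarith
  have hb' : 0 < 2 - b := by linarith
  have hprod : 1 ≤ (2 - a) * (2 - b) := by nlinarith
  calc 1 / (2 - b) - 1 / (2 - a) = (b - a) / ((2 - a) * (2 - b)) := by
        field_simp
        ring
    _ ≤ b - a := div_le_self (by linarith) hprod

lemma monotoneOn_charge : MonotoneOn charge (Set.Iic 1) := by
  intro a ha b hb hab
  rw [Set.mem_Iic] at ha hb
  rw [charge_eq (by linarith), charge_eq (by linarith)]
  linarith [one_div_sub_one_div_le hab hb]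

lemma div_add_charge {x : ℝ} (hx : x ≠ 2) : x / (2 * (2 - x)) + charge x = x := by
  have : 2 - x ≠ 0 := sub_ne_zero.2 hx.symm
  unfold charge
  field_simp
  ring

end NegativeEdge

theorem negative_edge_charging_general (S t : ℝ) (htS : t ≤ S) (hS1 : S ≤ 1) :
    S / (2 * (2 - S)) + (3 - 2 * t) * t / (2 * (2 - t)) ≤ S := by
  calc S / (2 * (2 - S)) + NegativeEdge.charge t
      ≤ S / (2 * (2 - S)) + NegativeEdge.charge S := by
        gcongr
        exact NegativeEdge.monotoneOn_charge (htS.trans hS1) hS1 htS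
    _ = S := NegativeEdge.div_add_charge (by linarith)

/-- for `0 ≤ t ≤ S ≤ 1`, `S/(2(2−S)) + (3−2t)·t/(2(2−t)) ≤ S`. -/
theorem negative_edge_charging (S t : ℝ) (ht0 : 0 ≤ t) (htS : t ≤ S) (hS1 : S ≤ 1) :
    S / (2 * (2 - S)) + (3 - 2 * t) * t / (2 * (2 - t)) ≤ S :=
  negative_edge_charging_general S t htS hS1
end

section
/- Let m, x, s ∈ ℝ with 0 ≤ m ≤ x ≤ 1 and 0 ≤ s ≤ x. Then (2x − s)/(2(1 + x − s)) + m²/(1+m) ≤ x. -/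
/-! Put `t = x - s ∈ [0, x]`. Since `x ≤ 1`, the first term `(x + t) / (2 (1 + t))` is increasing
in `t` and `m ^ 2 / (1 + m)` is increasing in `m`, so the left side is largest at `t = x`, `m = x`,
where it equals `x / (1 + x) + x ^ 2 / (1 + x) = x`. -/

theorem add_div_one_add_le_add_div_one_add {a t u : ℝ} (ha : a ≤ 1) (ht : -1 < t) (htu : t ≤ u) :
    (a + t) / (1 + t) ≤ (a + u) / (1 + u) := by
  rw [div_le_div_iff₀ (by linarith) (by linarith)]
  nlinarith [mul_nonneg (sub_nonneg.2 ha) (sub_nonneg.2 htu)]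

theorem sq_div_one_add_le_sq_div_one_add {a b : ℝ} (ha : 0 ≤ a) (hab : a ≤ b) :
    a ^ 2 / (1 + a) ≤ b ^ 2 / (1 + b) := by
  rw [div_le_div_iff₀ (by linarith) (by linarith)]
  nlinarith [mul_nonneg (mul_nonneg ha (ha.trans hab)) (sub_nonneg.2 hab)]

/-- for `0 ≤ m ≤ x ≤ 1` and `0 ≤ s ≤ x`,
`(2x − s)/(2(1 + x − s)) + m²/(1+m) ≤ x`. -/
theorem positive_edge_charging (m x s : ℝ) (hm0 : 0 ≤ m) (hmx : m ≤ x) (hx1 : x ≤ 1)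
    (hs0 : 0 ≤ s) (hsx : s ≤ x) :
    (2 * x - s) / (2 * (1 + x - s)) + m ^ 2 / (1 + m) ≤ x := by
  have hx : 1 + x ≠ 0 := by linarith
  calc (2 * x - s) / (2 * (1 + x - s)) + m ^ 2 / (1 + m)
      = (x + (x - s)) / (1 + (x - s)) / 2 + m ^ 2 / (1 + m) := by
        rw [div_div]; congr 2 <;> ring
    _ ≤ (x + x) / (1 + x) / 2 + x ^ 2 / (1 + x) := by
      gcongr ?_ / 2 + ?_
      · exact add_div_one_add_le_add_div_one_add hx1 (by linarith) (by linarith)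
      · exact sq_div_one_add_le_sq_div_one_add hm0 hmx
    _ = x := by field_simp; ring
end

section
/- Let x, y, z ∈ [0,1] satisfy the triangle inequalities x ≤ y + z, y ≤ z + x, and z ≤ x + y. Then 9·( x²/(1+x) + y²/(1+y) + (1+2z)(1−z)/(2(1+z)) ) ≥ 3. -/
/-! By Sedrakyan's lemma the two positive-edge terms are at least `(x + y)² / (2 + x + y)`, which
is monotone in `x + y`; the triangle inequality `z ≤ x + y` thus bounds them below by `z² / (2 + z)`.
What remains is the one-variable inequality
`3 (z² / (2 + z) + (1 + 2z)(1 - z) / (2(1 + z))) - 1 = (1 - z)(2 + 5z) / (2(2 + z)(1 + z)) ≥ 0`,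
tight at `z = 1`. -/

section LinearOrderedField

variable {R : Type*} [Field R] [LinearOrder R] [IsStrictOrderedRing R]

theorem sq_add_div_add_le_sq_div_add_sq_div (a b : R) {c d : R} (hc : 0 < c) (hd : 0 < d) :
    (a + b) ^ 2 / (c + d) ≤ a ^ 2 / c + b ^ 2 / d := by
  simpa [Fin.sum_univ_two] using
    Finset.sq_sum_div_le_sum_sq_div Finset.univ ![a, b] (g := ![c, d])
      (by simp [Fin.forall_fin_two, hc, hd])

theorem sq_div_add_le_sq_div_add {a b c : R} (hc : 0 < c) (ha : 0 ≤ a) (hab : a ≤ b) :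
    a ^ 2 / (c + a) ≤ b ^ 2 / (c + b) := by
  rw [div_le_div_iff₀ (by linarith) (by linarith)]
  nlinarith [mul_nonneg (mul_nonneg ha (ha.trans hab)) (sub_nonneg.2 hab),
    mul_nonneg hc.le (mul_nonneg (sub_nonneg.2 hab) (add_nonneg ha (ha.trans hab)))]

end LinearOrderedField

theorem one_le_three_mul_sq_div_add_add {z : ℝ} (hz : z ∈ Set.Icc (0 : ℝ) 1) :
    1 ≤ 3 * (z ^ 2 / (2 + z) + (1 + 2 * z) * (1 - z) / (2 * (1 + z))) := by
  obtain ⟨hz0, hz1⟩ := hz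
  have key : 3 * (z ^ 2 / (2 + z) + (1 + 2 * z) * (1 - z) / (2 * (1 + z))) - 1
      = (1 - z) * (2 + 5 * z) / (2 * (2 + z) * (1 + z)) := by
    field_simp
    ring
  have : 0 ≤ (1 - z) * (2 + 5 * z) / (2 * (2 + z) * (1 + z)) := by
    apply div_nonneg <;> nlinarith
  linarith

theorem triangle_ppm_general (x y z : ℝ)
    (hx : x ∈ Set.Icc (0 : ℝ) 1) (hy : y ∈ Set.Icc (0 : ℝ) 1) (hz : z ∈ Set.Icc (0 : ℝ) 1)
    (hzxy : z ≤ x + y) :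
    9 * (x ^ 2 / (1 + x) + y ^ 2 / (1 + y) +
        (1 + 2 * z) * (1 - z) / (2 * (1 + z))) ≥ 3 := by
  have sedrakyan : (x + y) ^ 2 / (2 + (x + y)) ≤ x ^ 2 / (1 + x) + y ^ 2 / (1 + y) := by
    have := sq_add_div_add_le_sq_div_add_sq_div x y (by linarith [hx.1] : (0 : ℝ) < 1 + x)
      (by linarith [hy.1] : (0 : ℝ) < 1 + y)
    rwa [show (1 + x) + (1 + y) = 2 + (x + y) by ring] at this
  have mono : z ^ 2 / (2 + z) ≤ (x + y) ^ 2 / (2 + (x + y)) :=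
    sq_div_add_le_sq_div_add two_pos hz.1 hzxy
  linarith [one_le_three_mul_sq_div_add_add hz]

/-- triangle analysis for `(+,+,−)` triangles with `α = 18/11`:
for `x, y, z ∈ [0,1]` satisfying the triangle inequalities,
`9·(x²/(1+x) + y²/(1+y) + (1+2z)(1−z)/(2(1+z))) ≥ 3`. -/
theorem triangle_ppm (x y z : ℝ)
    (hx : x ∈ Set.Icc (0 : ℝ) 1) (hy : y ∈ Set.Icc (0 : ℝ) 1) (hz : z ∈ Set.Icc (0 : ℝ) 1)
    (hxyz : x ≤ y + z) (hyzx : y ≤ z + x) (hzxy : z ≤ x + y) :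
    9 * (x ^ 2 / (1 + x) + y ^ 2 / (1 + y) +
        (1 + 2 * z) * (1 - z) / (2 * (1 + z))) ≥ 3 :=
  triangle_ppm_general x y z hx hy hz hzxy
end

section
/- Let x, y, z ∈ [0,1] satisfy the triangle inequalities x ≤ y + z, y ≤ z + x, and z ≤ x + y, and set M = max{1/2, 1−x, 1−y, 1−z}. Then 9·( x²/(1+x) + y²/(1+y) + M²/(1+M) ) ≥ 3. -/
/-! The function `t ↦ t²/(1+t)` lies above its tangent `(5t - 1)/9` at `t = 1/2` on `(-1, ∞)`,
since `9t² - (5t - 1)(1 + t) = (2t - 1)²`. As `M ≥ 1 - x`, the terms for `x` and `M` therefore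
already sum to at least `(5(x + M) - 2)/9 ≥ 1/3`, and the term for `y` is nonnegative. -/

theorem tangent_le_sq_div_one_add {t : ℝ} (ht : 0 < 1 + t) :
    (5 * t - 1) / 9 ≤ t ^ 2 / (1 + t) := by
  rw [div_le_div_iff₀ (by norm_num) ht]
  nlinarith [sq_nonneg (2 * t - 1)]

theorem one_third_le_sq_div_one_add_add {a b : ℝ} (ha : 0 < 1 + a) (hb : 0 < 1 + b)
    (hab : 1 ≤ a + b) : 1 / 3 ≤ a ^ 2 / (1 + a) + b ^ 2 / (1 + b) := by
  linarith [tangent_le_sq_div_one_add ha, tangent_le_sq_div_one_add hb]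

theorem triangle_ppo_general (x y z : ℝ)
    (hx : x ∈ Set.Icc (0 : ℝ) 1) (hy : y ∈ Set.Icc (0 : ℝ) 1) :
    9 * (x ^ 2 / (1 + x) + y ^ 2 / (1 + y) +
        (max (max (1 / 2) (1 - x)) (max (1 - y) (1 - z))) ^ 2 /
          (1 + max (max (1 / 2) (1 - x)) (max (1 - y) (1 - z)))) ≥ 3 := by
  set M := max (max (1 / 2) (1 - x)) (max (1 - y) (1 - z))
  have hM : 1 - x ≤ M := le_max_of_le_left (le_max_right _ _)
  have hxM : 1 / 3 ≤ x ^ 2 / (1 + x) + M ^ 2 / (1 + M) :=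
    one_third_le_sq_div_one_add_add (by linarith [hx.1]) (by linarith [hx.2]) (by linarith)
  have hy_term : 0 ≤ y ^ 2 / (1 + y) := div_nonneg (sq_nonneg y) (by linarith [hy.1])
  linarith

/-- triangle analysis for `(+,+,∘)` triangles with `α = 18/11`:
for `x, y, z ∈ [0,1]` satisfying the triangle inequalities and
`M = max{1/2, 1−x, 1−y, 1−z}`, `9·(x²/(1+x) + y²/(1+y) + M²/(1+M)) ≥ 3`. -/
theorem triangle_ppo (x y z : ℝ)
    (hx : x ∈ Set.Icc (0 : ℝ) 1) (hy : y ∈ Set.Icc (0 : ℝ) 1) (hz : z ∈ Set.Icc (0 : ℝ) 1)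
    (hxyz : x ≤ y + z) (hyzx : y ≤ z + x) (hzxy : z ≤ x + y) :
    9 * (x ^ 2 / (1 + x) + y ^ 2 / (1 + y) +
        (max (max (1 / 2) (1 - x)) (max (1 - y) (1 - z))) ^ 2 /
          (1 + max (max (1 / 2) (1 - x)) (max (1 - y) (1 - z)))) ≥ 3 :=
  triangle_ppo_general x y z hx hy
end

section
/- Let V be a finite set, L a set of colors, 0 and γ two distinct elements not in L, φ : V × V → L ∪ {0, γ} a symmetric input function with φ(u,v) = 0 iff u = v, and Φ a chromatic clustering of V represented as a symmetric binary function. Fix β = 1/10. For u ∈ V let C_u denote the cluster of Φ containing u; call a vertex u bad if d_0(φ_u, Φ_u) > (β/2)·|C_u|, and call a cluster C of Φ bad if |{u ∈ C : u is bad}| ≥ (β/3)·|C|. Define Φᵖ by Φᵖ(u,v) = γ for u ≠ v whenever u or v is bad or lies in a bad cluster, and Φᵖ(u,v) = Φ(u,v) otherwise. Then for every cluster K of Φᵖ with |K| ≥ 2 and every u ∈ K, d_0(φ_u, Φᵖ_u) < β·|K|. -/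
open scoped Classical

/-!
A vertex `u` of a non-singleton atom `K` is good and lies in a good cluster `C = C u`, so every
vertex of `C` lies in a good cluster. Hence the atom contains all good vertices of `C`, giving
`|C| ≤ |B| + |K|` with `B` the bad vertices of `C` and `|B| < β/3·|C|`, while each new mistake of
`u` is an old one or a bad vertex of `C`, so `d_0(φ_u, Φᵖ_u) ≤ β/2·|C| + |B|`. Eliminating `|C|`
and `|B|` gives `d_0(φ_u, Φᵖ_u) < β·|K|` as soon as `β ≤ 1/2`.
-/

namespace Preclustering

variable {V L : Type*}

/-- Values are encoded as `none = 0`, `some none = γ`, `some (some c) = c`. -/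
noncomputable def precluster (Φ : V → V → Option (Option L)) (bad badC : V → Prop) (u v : V) :
    Option (Option L) :=
  if u = v then none
  else if bad u ∨ badC u ∨ bad v ∨ badC v then some none
  else Φ u v

theorem not_bad_of_precluster_ne {Φ : V → V → Option (Option L)} {bad badC : V → Prop}
    {u v : V} (huv : u ≠ v) (h : precluster Φ bad badC u v ≠ some none) :
    ¬bad u ∧ ¬badC u := by
  by_contra hbad
  exact h (by rw [precluster, if_neg huv, if_pos (by tauto)])

variable [Fintype V]

noncomputable def clusterOf (Φ : V → V → Option (Option L)) (u : V) : Finset V :=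
  Finset.univ.filter fun v => Φ u v ≠ some none

theorem clusterOf_eq_of_mem {Φ : V → V → Option (Option L)}
    (hsymm : ∀ u v, Φ u v = Φ v u) (hdiag : ∀ u v, Φ u v = none ↔ u = v)
    (hclust : ∀ (u v : V) (c : L), Φ u v = some (some c) →
      ∀ w, w ≠ u → w ≠ v → Φ u w = Φ v w ∧ (Φ u w = some (some c) ∨ Φ u w = some none))
    {u w : V} (hw : w ∈ clusterOf Φ u) : clusterOf Φ w = clusterOf Φ u := by
  rcases eq_or_ne w u with rfl | hwu
  · rfl
  have hγ : Φ u w ≠ some none := (Finset.mem_filter.1 hw).2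
  obtain ⟨c, hc⟩ : ∃ c, Φ u w = some (some c) := by
    match h : Φ u w, hγ with
    | none, _ => exact absurd ((hdiag u w).1 h).symm hwu
    | some (some c), _ => exact ⟨c, rfl⟩
  ext x
  simp only [clusterOf, Finset.mem_filter, Finset.mem_univ, true_and]
  rcases eq_or_ne x u with rfl | hxu
  · simp [hsymm w x, hc, (hdiag x x).2 rfl]
  rcases eq_or_ne x w with rfl | hxw
  · simp [hc, (hdiag x x).2 rfl]
  rw [(hclust u w c hc x hxu hxw).1]

section precluster

variable {φ Φ : V → V → Option (Option L)} {bad badC : V → Prop} {u : V}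
  (hu : ¬bad u) (hCu : ¬badC u) (hC : ∀ w ∈ clusterOf Φ u, ¬badC w)
include hu hCu hC

theorem mistakes_precluster_subset (hφ : φ u u = none) :
    (Finset.univ.filter fun w => φ u w ≠ precluster Φ bad badC u w) ⊆
      (Finset.univ.filter fun w => φ u w ≠ Φ u w) ∪ (clusterOf Φ u).filter bad := by
  intro w hw
  have hne : φ u w ≠ precluster Φ bad badC u w := (Finset.mem_filter.1 hw).2
  simp only [Finset.mem_union, Finset.mem_filter, Finset.mem_univ, true_and]
  unfold precluster at hne
  split_ifs at hne with huw hcond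
  · subst huw
    exact absurd hφ hne
  · by_cases hwC : w ∈ clusterOf Φ u
    · have := hC w hwC
      exact Or.inr ⟨hwC, by tauto⟩
    · have hΦ : Φ u w = some none := by simpa [clusterOf] using hwC
      exact Or.inl (hΦ ▸ hne)
  · exact Or.inl hne

theorem filter_not_bad_subset_clusterOf_precluster :
    (clusterOf Φ u).filter (¬bad ·) ⊆ clusterOf (precluster Φ bad badC) u := by
  intro w hw
  obtain ⟨hwC, hwb⟩ := Finset.mem_filter.1 hw
  rcases eq_or_ne u w with rfl | huw
  · simp [clusterOf, precluster]
  have hcond : ¬(bad u ∨ badC u ∨ bad w ∨ badC w) := by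
    simp only [not_or]
    exact ⟨hu, hCu, hwb, hC w hwC⟩
  refine Finset.mem_filter.2 ⟨Finset.mem_univ w, ?_⟩
  rw [precluster, if_neg huw, if_neg hcond]
  exact (Finset.mem_filter.1 hwC).2

theorem card_clusterOf_le :
    (clusterOf Φ u).card ≤
      ((clusterOf Φ u).filter bad).card + (clusterOf (precluster Φ bad badC) u).card := by
  rw [← Finset.card_filter_add_card_filter_not (s := clusterOf Φ u) bad]
  exact Nat.add_le_add_left
    (Finset.card_le_card (filter_not_bad_subset_clusterOf_precluster hu hCu hC)) _

end precluster

/-- The arithmetic core: `m`, `b`, `c`, `k`, `mp` stand for the old mistakes, the bad vertices of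
the cluster, the cluster, the atom and the new mistakes. -/
theorem lt_of_precluster_bounds {β m b c k mp : ℝ} (hβ₀ : 0 ≤ β) (hβ : β ≤ 1 / 2) (hb : 0 ≤ b)
    (hmp : mp ≤ m + b) (hm : m ≤ β / 2 * c) (hbc : b < β / 3 * c) (hc : c ≤ b + k) :
    mp < β * k := by
  nlinarith [mul_le_mul_of_nonneg_left hc hβ₀, mul_le_mul_of_nonneg_left hβ hb]

end Preclustering

open Preclustering in
theorem atom_local_cost_bound_general {V L : Type*} [Fintype V]
    (φ Φ : V → V → Option (Option L))
    (hφdiag : ∀ u v : V, φ u v = none ↔ u = v)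
    (hΦsymm : ∀ u v : V, Φ u v = Φ v u)
    (hΦdiag : ∀ u v : V, Φ u v = none ↔ u = v)
    (hΦclust : ∀ (u v : V) (c : L), Φ u v = some (some c) →
      ∀ w : V, w ≠ u → w ≠ v →
        Φ u w = Φ v w ∧ (Φ u w = some (some c) ∨ Φ u w = some none))
    (β : ℝ) (hβ : β = 1 / 10)
    (C : V → Finset V)
    (hC : ∀ u : V, C u = Finset.univ.filter fun v : V => Φ u v ≠ some none)
    (bad : V → Prop)
    (hbad : ∀ u : V, bad u ↔
      ((Finset.univ.filter fun v : V => φ u v ≠ Φ u v).card : ℝ) > β / 2 * (C u).card)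
    (badC : V → Prop)
    (hbadC : ∀ u : V, badC u ↔
      ((((C u).filter fun w : V => bad w).card : ℝ) ≥ β / 3 * (C u).card))
    (Φp : V → V → Option (Option L))
    (hΦp : ∀ u v : V, Φp u v =
      if u = v then none
      else if bad u ∨ badC u ∨ bad v ∨ badC v then some none
      else Φ u v) :
    ∀ u : V,
      2 ≤ (Finset.univ.filter fun v : V => Φp u v ≠ some none).card →
      ((Finset.univ.filter fun v : V => φ u v ≠ Φp u v).card : ℝ) <
        β * (Finset.univ.filter fun v : V => Φp u v ≠ some none).card := by
  obtain rfl : C = clusterOf Φ := funext hC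
  obtain rfl : Φp = precluster Φ bad badC := funext₂ hΦp
  intro u hK
  obtain ⟨v, hvK, hvu⟩ := Finset.exists_mem_ne hK u
  obtain ⟨hu, hCu⟩ := not_bad_of_precluster_ne (Ne.symm hvu) (Finset.mem_filter.1 hvK).2
  have hC : ∀ w ∈ clusterOf Φ u, ¬badC w := fun w hw => by
    rwa [hbadC, clusterOf_eq_of_mem hΦsymm hΦdiag hΦclust hw, ← hbadC]
  have hmp := Finset.card_le_card (mistakes_precluster_subset hu hCu hC ((hφdiag u u).2 rfl))
  have hcard := card_clusterOf_le hu hCu hC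
  refine lt_of_precluster_bounds (by norm_num [hβ]) (by norm_num [hβ]) (Nat.cast_nonneg _)
    ?_ (not_lt.1 fun h => hu ((hbad u).2 h)) (not_le.1 fun h => hCu ((hbadC u).2 h)) ?_
  · exact_mod_cast hmp.trans (Finset.card_union_le _ _)
  · exact_mod_cast hcard

/-- preclustering with `β = 1/10`. The codomain `L ∪ {0, γ}` is modeled by
`Option (Option L)` with `none = 0` and `some none = γ`; `Φ` is a chromatic clustering
given as a symmetric binary function, `C u` is the cluster of `Φ` containing `u`,
`bad u` means `d_0(φ_u, Φ_u) > (β/2)·|C u|`, `badC u` means the cluster of `u` contains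
at least a `β/3` fraction of bad vertices, and `Φᵖ` sets all pairs touching a bad vertex
or a vertex of a bad cluster to `γ`. Then every cluster `K` of `Φᵖ` with `|K| ≥ 2`
satisfies `d_0(φ_u, Φᵖ_u) < β·|K|` for each `u ∈ K`. -/
theorem atom_local_cost_bound {V L : Type*} [Fintype V]
    (φ Φ : V → V → Option (Option L))
    (hφsymm : ∀ u v : V, φ u v = φ v u)
    (hφdiag : ∀ u v : V, φ u v = none ↔ u = v)
    (hΦsymm : ∀ u v : V, Φ u v = Φ v u)
    (hΦdiag : ∀ u v : V, Φ u v = none ↔ u = v)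
    (hΦclust : ∀ (u v : V) (c : L), Φ u v = some (some c) →
      ∀ w : V, w ≠ u → w ≠ v →
        Φ u w = Φ v w ∧ (Φ u w = some (some c) ∨ Φ u w = some none))
    (β : ℝ) (hβ : β = 1 / 10)
    (C : V → Finset V)
    (hC : ∀ u : V, C u = Finset.univ.filter fun v : V => Φ u v ≠ some none)
    (bad : V → Prop)
    (hbad : ∀ u : V, bad u ↔
      ((Finset.univ.filter fun v : V => φ u v ≠ Φ u v).card : ℝ) > β / 2 * (C u).card)
    (badC : V → Prop)
    (hbadC : ∀ u : V, badC u ↔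
      ((((C u).filter fun w : V => bad w).card : ℝ) ≥ β / 3 * (C u).card))
    (Φp : V → V → Option (Option L))
    (hΦp : ∀ u v : V, Φp u v =
      if u = v then none
      else if bad u ∨ badC u ∨ bad v ∨ badC v then some none
      else Φ u v) :
    ∀ u : V,
      2 ≤ (Finset.univ.filter fun v : V => Φp u v ≠ some none).card →
      ((Finset.univ.filter fun v : V => φ u v ≠ Φp u v).card : ℝ) <
        β * (Finset.univ.filter fun v : V => Φp u v ≠ some none).card :=
  atom_local_cost_bound_general φ Φ hφdiag hΦsymm hΦdiag hΦclust β hβ C hC bad hbad badC hbadC Φp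
    hΦp
end

section
/- Let V be a finite set, L a set of colors, 0 and γ two distinct elements not in L, φ : V × V → L ∪ {0, γ} a symmetric input function with φ(u,v) = 0 iff u = v, and β = 1/10. Let Φᵖ be the atom clustering produced from an arbitrary chromatic clustering Φ by the marking procedure: with C_u the cluster of Φ containing u, a vertex u is bad if d_0(φ_u, Φ_u) > (β/2)|C_u|, a cluster C is bad if at least a β/3 fraction of its vertices are bad, and Φᵖ(u,v) = γ for u ≠ v whenever u or v is bad or lies in a bad cluster, Φᵖ(u,v) = Φ(u,v) otherwise. Let Φ* be any chromatic clustering of V minimizing obj(Φ*) = |{ {u,v} : u ≠ v, φ(u,v) ≠ Φ*(u,v) }| over all chromatic clusterings. Then Φ*(u,v) ≤ Φᵖ(u,v) for all u, v ∈ V, in the partial order on L ∪ {0, γ} in which 0 is below every color, every color is below γ, and distinct colors are incomparable; equivalently, every cluster K of Φᵖ with |K| ≥ 2 is contained in a single cluster of Φ*, and Φ*(u,v) = Φᵖ(u,v) for all distinct u, v ∈ K. -/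
open scoped Classical

/-- A chromatic clustering of `V` with colors `L`, as a symmetric binary function into
`Option (Option L)` where `none = 0`, `some none = γ`, `some (some c) = c ∈ L`. -/
def IsChromaticClustering {V L : Type*} (Φ : V → V → Option (Option L)) : Prop :=
  (∀ u v : V, Φ u v = Φ v u) ∧
  (∀ u v : V, Φ u v = none ↔ u = v) ∧
  (∀ (u v : V) (c : L), Φ u v = some (some c) →
    ∀ w : V, w ≠ u → w ≠ v →
      Φ u w = Φ v w ∧ (Φ u w = some (some c) ∨ Φ u w = some none))

/-- The chromatic correlation clustering disagreement cost: the number of unordered pairs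
of distinct vertices on which `φ` and `Φ` disagree. -/
noncomputable def objCCC {V L : Type*} [Fintype V]
    (φ Φ : V → V → Option (Option L)) : ℕ :=
  (Finset.univ.filter fun e : Sym2 V =>
    ∃ u v : V, e = s(u, v) ∧ u ≠ v ∧ φ u v ≠ Φ u v).card

/-- The partial order on `L ∪ {0, γ}`: `0` is below everything, everything is below `γ`,
and distinct colors are incomparable. -/
def leColor {L : Type*} (a b : Option (Option L)) : Prop :=
  a = none ∨ b = some none ∨ a = b

set_option linter.unusedSectionVars false
set_option maxHeartbeats 1000000

namespace CCCProof

open Finset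

variable {V L : Type*} [Fintype V]

noncomputable def Dord (φ Ψ : V → V → Option (Option L)) : ℕ :=
  ((univ ×ˢ univ : Finset (V × V)).filter fun p => φ p.1 p.2 ≠ Ψ p.1 p.2).card

noncomputable def Drow (φ Ψ : V → V → Option (Option L)) (x : V) : ℕ :=
  (univ.filter fun y => φ x y ≠ Ψ x y).card

lemma Dord_eq_two_mul_obj (φ Ψ : V → V → Option (Option L))
    (hφs : ∀ u v, φ u v = φ v u) (hΨs : ∀ u v, Ψ u v = Ψ v u)
    (hdiag : ∀ u, φ u u = Ψ u u) :
    Dord φ Ψ = 2 * objCCC φ Ψ := by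
  classical
  set Q := ((univ ×ˢ univ : Finset (V × V)).filter fun p => φ p.1 p.2 ≠ Ψ p.1 p.2) with hQ
  have hmemQ : ∀ p : V × V, p ∈ Q ↔ φ p.1 p.2 ≠ Ψ p.1 p.2 := by
    intro p
    simp [hQ, Finset.mem_filter, Finset.mem_product]
  have hne : ∀ p : V × V, p ∈ Q → p.1 ≠ p.2 := by
    intro p hp heq
    exact (hmemQ p |>.1 hp) (by rw [heq]; exact hdiag p.2)
  have hcard := Finset.card_eq_sum_card_image (fun p : V × V => s(p.1, p.2)) Q
  have hfib : ∀ e ∈ Q.image (fun p : V × V => s(p.1, p.2)),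
      (Q.filter fun p => s(p.1, p.2) = e).card = 2 := by
    intro e he
    obtain ⟨⟨a, b⟩, hab, rfl⟩ := Finset.mem_image.1 he
    have hne' : a ≠ b := hne _ hab
    have : (Q.filter fun p : V × V => s(p.1, p.2) = s(a, b)) = {(a, b), (b, a)} := by
      ext ⟨x, y⟩
      simp only [Finset.mem_filter, Finset.mem_insert, Finset.mem_singleton, Prod.mk.injEq]
      constructor
      · rintro ⟨hxy, hs⟩
        rcases Sym2.eq_iff.1 hs with ⟨rfl, rfl⟩ | ⟨rfl, rfl⟩
        · exact Or.inl ⟨rfl, rfl⟩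
        · exact Or.inr ⟨rfl, rfl⟩
      · rintro (⟨rfl, rfl⟩ | ⟨rfl, rfl⟩)
        · exact ⟨hab, rfl⟩
        · refine ⟨(hmemQ _).2 ?_, Sym2.eq_swap⟩
          have := (hmemQ _).1 hab
          simp only at this ⊢
          rw [hφs, hΨs] at this
          exact this
    rw [this]
    rw [Finset.card_insert_of_notMem (by simp [Prod.ext_iff]; exact fun h => (hne' h).elim),
      Finset.card_singleton]
  have himg : Q.image (fun p : V × V => s(p.1, p.2)) =
      (univ.filter fun e : Sym2 V => ∃ u v : V, e = s(u, v) ∧ u ≠ v ∧ φ u v ≠ Ψ u v) := by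
    ext e
    simp only [Finset.mem_image, Finset.mem_filter, Finset.mem_univ, true_and]
    constructor
    · rintro ⟨⟨a, b⟩, hab, rfl⟩
      exact ⟨a, b, rfl, hne _ hab, (hmemQ _).1 hab⟩
    · rintro ⟨a, b, rfl, hab, hd⟩
      exact ⟨(a, b), (hmemQ _).2 hd, rfl⟩
  rw [Dord, ← hQ, hcard, Finset.sum_congr rfl hfib, Finset.sum_const, smul_eq_mul,
    himg, objCCC, mul_comm]

noncomputable def DTs (φ Ψ : V → V → Option (Option L)) (A : Finset V) : Finset (V × V) :=
  (univ ×ˢ univ : Finset (V × V)).filter fun p =>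
    (φ p.1 p.2 ≠ Ψ p.1 p.2) ∧ (p.1 ∈ A ∨ p.2 ∈ A)

lemma card_filter_prod_ne (A B : Finset V) (F G : V → V → Option (Option L)) :
    ((A ×ˢ B).filter fun p => F p.1 p.2 ≠ G p.1 p.2).card = ∑ x ∈ A, (B.filter fun y => F x y ≠ G x y).card := by
  rw [Finset.card_eq_sum_card_fiberwise (f := Prod.fst) (t := A)
    (fun p hp => by simp only [Finset.mem_coe, Finset.mem_filter, Finset.mem_product] at hp; exact hp.1.1)]
  refine Finset.sum_congr rfl fun x hx => ?_
  have he : ((A ×ˢ B).filter fun p => F p.1 p.2 ≠ G p.1 p.2).filter (fun p => p.1 = x)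
      = (B.filter fun y => F x y ≠ G x y).image (fun y => (x, y)) := by
    ext ⟨a, b⟩
    simp only [Finset.mem_filter, Finset.mem_product, Finset.mem_image]
    constructor
    · rintro ⟨⟨⟨ha, hb⟩, hP⟩, rfl⟩
      exact ⟨b, ⟨hb, hP⟩, rfl⟩
    · rintro ⟨y, ⟨hy, hP⟩, heq⟩
      obtain ⟨rfl, rfl⟩ := Prod.mk.injEq .. ▸ heq
      · exact ⟨⟨⟨hx, hy⟩, hP⟩, rfl⟩
  rw [he, Finset.card_image_of_injective _ (fun a b h => by injection h)]

lemma card_filter_prod_ne' (A B : Finset V) (F G : V → V → Option (Option L)) :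
    ((A ×ˢ B).filter fun p => F p.1 p.2 ≠ G p.1 p.2).card = ∑ y ∈ B, (A.filter fun x => F x y ≠ G x y).card := by
  rw [Finset.card_eq_sum_card_fiberwise (f := Prod.snd) (t := B)
    (fun p hp => by simp only [Finset.mem_coe, Finset.mem_filter, Finset.mem_product] at hp; exact hp.1.2)]
  refine Finset.sum_congr rfl fun y hy => ?_
  have he : ((A ×ˢ B).filter fun p => F p.1 p.2 ≠ G p.1 p.2).filter (fun p => p.2 = y)
      = (A.filter fun x => F x y ≠ G x y).image (fun x => (x, y)) := by
    ext ⟨a, b⟩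
    simp only [Finset.mem_filter, Finset.mem_product, Finset.mem_image]
    constructor
    · rintro ⟨⟨⟨ha, hb⟩, hP⟩, rfl⟩
      exact ⟨a, ⟨ha, hP⟩, rfl⟩
    · rintro ⟨x, ⟨hx, hP⟩, heq⟩
      obtain ⟨rfl, rfl⟩ := Prod.mk.injEq .. ▸ heq
      · exact ⟨⟨⟨hx, hy⟩, hP⟩, rfl⟩
  rw [he, Finset.card_image_of_injective _ (fun a b h => by
    simpa [Prod.ext_iff] using h)]

lemma card_filter_prod_eq (A B : Finset V) (F G : V → V → Option (Option L)) (z : Option (Option L)) :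
    ((A ×ˢ B).filter fun p => F p.1 p.2 = z).card = ∑ x ∈ A, (B.filter fun y => F x y = z).card := by
  rw [Finset.card_eq_sum_card_fiberwise (f := Prod.fst) (t := A)
    (fun p hp => by simp only [Finset.mem_coe, Finset.mem_filter, Finset.mem_product] at hp; exact hp.1.1)]
  refine Finset.sum_congr rfl fun x hx => ?_
  have he : ((A ×ˢ B).filter fun p => F p.1 p.2 = z).filter (fun p => p.1 = x)
      = (B.filter fun y => F x y = z).image (fun y => (x, y)) := by
    ext ⟨a, b⟩
    simp only [Finset.mem_filter, Finset.mem_product, Finset.mem_image]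
    constructor
    · rintro ⟨⟨⟨ha, hb⟩, hP⟩, rfl⟩
      exact ⟨b, ⟨hb, hP⟩, rfl⟩
    · rintro ⟨y, ⟨hy, hP⟩, heq⟩
      obtain ⟨rfl, rfl⟩ := Prod.mk.injEq .. ▸ heq
      · exact ⟨⟨⟨hx, hy⟩, hP⟩, rfl⟩
  rw [he, Finset.card_image_of_injective _ (fun a b h => by injection h)]

lemma row_swap (φ Ψ : V → V → Option (Option L))
    (hφs : ∀ a b, φ a b = φ b a) (hΨs : ∀ a b, Ψ a b = Ψ b a) (x : V) :
    ((univ : Finset V).filter fun y => φ y x ≠ Ψ y x).card = Drow φ Ψ x := by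
  unfold Drow
  congr 1
  apply Finset.filter_congr
  intro y _
  rw [hφs, hΨs]

lemma DTs_card_le (φ Ψ : V → V → Option (Option L)) (A : Finset V)
    (hφs : ∀ a b, φ a b = φ b a) (hΨs : ∀ a b, Ψ a b = Ψ b a) :
    (DTs φ Ψ A).card ≤ 2 * ∑ x ∈ A, Drow φ Ψ x := by
  have hsub : DTs φ Ψ A ⊆
      ((A ×ˢ (univ : Finset V)).filter fun p => φ p.1 p.2 ≠ Ψ p.1 p.2) ∪
      (((univ : Finset V) ×ˢ A).filter fun p => φ p.1 p.2 ≠ Ψ p.1 p.2) := by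
    rintro ⟨x, y⟩ hp
    simp only [DTs, Finset.mem_filter, Finset.mem_product, Finset.mem_univ, true_and] at hp
    simp only [Finset.mem_union, Finset.mem_filter, Finset.mem_product, Finset.mem_univ,
      true_and, and_true]
    tauto
  have h1 : (((A ×ˢ (univ : Finset V)).filter fun p => φ p.1 p.2 ≠ Ψ p.1 p.2)).card
      = ∑ x ∈ A, Drow φ Ψ x := by
    rw [card_filter_prod_ne A univ φ Ψ]
    rfl
  have h2 : ((((univ : Finset V) ×ˢ A).filter fun p => φ p.1 p.2 ≠ Ψ p.1 p.2)).card
      = ∑ x ∈ A, Drow φ Ψ x := by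
    rw [card_filter_prod_ne' univ A φ Ψ]
    exact Finset.sum_congr rfl fun x _ => row_swap φ Ψ hφs hΨs x
  calc (DTs φ Ψ A).card ≤ _ := Finset.card_le_card hsub
    _ ≤ _ := Finset.card_union_le _ _
    _ ≤ 2 * ∑ x ∈ A, Drow φ Ψ x := by rw [h1, h2]; omega

lemma DTs_card_singleton (φ Ψ : V → V → Option (Option L)) (u : V)
    (hφs : ∀ a b, φ a b = φ b a) (hΨs : ∀ a b, Ψ a b = Ψ b a)
    (hdiag : φ u u = Ψ u u) :
    (DTs φ Ψ {u}).card = 2 * Drow φ Ψ u := by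
  have hunion : DTs φ Ψ {u} =
      ((({u} : Finset V) ×ˢ (univ : Finset V)).filter fun p => φ p.1 p.2 ≠ Ψ p.1 p.2) ∪
      (((univ : Finset V) ×ˢ ({u} : Finset V)).filter fun p => φ p.1 p.2 ≠ Ψ p.1 p.2) := by
    ext ⟨x, y⟩
    simp only [DTs, Finset.mem_filter, Finset.mem_product, Finset.mem_univ, true_and,
      Finset.mem_union, Finset.mem_singleton, and_true]
    tauto
  have hdisj : Disjoint
      ((({u} : Finset V) ×ˢ (univ : Finset V)).filter fun p => φ p.1 p.2 ≠ Ψ p.1 p.2)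
      (((univ : Finset V) ×ˢ ({u} : Finset V)).filter fun p => φ p.1 p.2 ≠ Ψ p.1 p.2) := by
    rw [Finset.disjoint_left]
    rintro ⟨x, y⟩ h1 h2
    simp only [Finset.mem_filter, Finset.mem_product, Finset.mem_univ, true_and, and_true,
      Finset.mem_singleton] at h1 h2
    obtain ⟨rfl, h1⟩ := h1
    obtain ⟨rfl, -⟩ := h2
    exact h1 hdiag
  have h1 : (((({u} : Finset V) ×ˢ (univ : Finset V)).filter
      fun p => φ p.1 p.2 ≠ Ψ p.1 p.2)).card = Drow φ Ψ u := by
    rw [card_filter_prod_ne {u} univ φ Ψ, Finset.sum_singleton]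
    rfl
  have h2 : ((((univ : Finset V) ×ˢ ({u} : Finset V)).filter
      fun p => φ p.1 p.2 ≠ Ψ p.1 p.2)).card = Drow φ Ψ u := by
    rw [card_filter_prod_ne' univ {u} φ Ψ, Finset.sum_singleton]
    exact row_swap φ Ψ hφs hΨs u
  rw [hunion, Finset.card_union_of_disjoint hdisj, h1, h2, two_mul]



noncomputable def DR (φ Ψ : V → V → Option (Option L)) (A : Finset V) : ℕ :=
  ((univ ×ˢ univ : Finset (V × V)).filter fun p =>
    (φ p.1 p.2 ≠ Ψ p.1 p.2) ∧ ¬(p.1 ∈ A ∨ p.2 ∈ A)).card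

lemma Dord_split (φ Ψ : V → V → Option (Option L)) (A : Finset V) :
    Dord φ Ψ = (DTs φ Ψ A).card + DR φ Ψ A := by
  rw [Dord, ← Finset.card_filter_add_card_filter_not
    (p := fun p : V × V => p.1 ∈ A ∨ p.2 ∈ A) (s := (univ ×ˢ univ : Finset (V × V)).filter
      fun p => φ p.1 p.2 ≠ Ψ p.1 p.2)]
  rw [DTs, DR, Finset.filter_filter, Finset.filter_filter]

lemma DR_congr (φ Ψ₁ Ψ₂ : V → V → Option (Option L)) (A : Finset V)
    (h : ∀ x y : V, x ∉ A → y ∉ A → Ψ₁ x y = Ψ₂ x y) :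
    DR φ Ψ₁ A = DR φ Ψ₂ A := by
  unfold DR
  congr 1
  apply Finset.filter_congr
  rintro ⟨x, y⟩ -
  simp only [not_or]
  constructor
  · rintro ⟨h1, h2, h3⟩; exact ⟨by rw [← h x y h2 h3]; exact h1, h2, h3⟩
  · rintro ⟨h1, h2, h3⟩; exact ⟨by rw [h x y h2 h3]; exact h1, h2, h3⟩

lemma card_filter_prod (A B : Finset V) (P : V → V → Prop) :
    ((A ×ˢ B).filter fun p => P p.1 p.2).card = ∑ x ∈ A, (B.filter fun y => P x y).card := by
  rw [Finset.card_eq_sum_card_fiberwise (f := Prod.fst) (t := A)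
    (fun p hp => by simp only [Finset.mem_coe, Finset.mem_filter, Finset.mem_product] at hp; exact hp.1.1)]
  refine Finset.sum_congr rfl fun x hx => ?_
  have he : ((A ×ˢ B).filter fun p => P p.1 p.2).filter (fun p => p.1 = x)
      = (B.filter fun y => P x y).image (fun y => (x, y)) := by
    ext ⟨a, b⟩
    simp only [Finset.mem_filter, Finset.mem_product, Finset.mem_image]
    constructor
    · rintro ⟨⟨⟨ha, hb⟩, hP⟩, rfl⟩
      exact ⟨b, ⟨hb, hP⟩, rfl⟩
    · rintro ⟨y, ⟨hy, hP⟩, heq⟩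
      obtain ⟨rfl, rfl⟩ := Prod.mk.injEq .. ▸ heq
      · exact ⟨⟨⟨hx, hy⟩, hP⟩, rfl⟩
  rw [he, Finset.card_image_of_injective _ (fun a b h => by injection h)]

lemma card_filter_prod' (A B : Finset V) (P : V → V → Prop) :
    ((A ×ˢ B).filter fun p => P p.1 p.2).card = ∑ y ∈ B, (A.filter fun x => P x y).card := by
  rw [Finset.card_eq_sum_card_fiberwise (f := Prod.snd) (t := B)
    (fun p hp => by simp only [Finset.mem_coe, Finset.mem_filter, Finset.mem_product] at hp; exact hp.1.2)]
  refine Finset.sum_congr rfl fun y hy => ?_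
  have he : ((A ×ˢ B).filter fun p => P p.1 p.2).filter (fun p => p.2 = y)
      = (A.filter fun x => P x y).image (fun x => (x, y)) := by
    ext ⟨a, b⟩
    simp only [Finset.mem_filter, Finset.mem_product, Finset.mem_image]
    constructor
    · rintro ⟨⟨⟨ha, hb⟩, hP⟩, rfl⟩
      exact ⟨a, ⟨ha, hP⟩, rfl⟩
    · rintro ⟨x, ⟨hx, hP⟩, heq⟩
      obtain ⟨rfl, rfl⟩ := Prod.mk.injEq .. ▸ heq
      · exact ⟨⟨⟨hx, hy⟩, hP⟩, rfl⟩
  rw [he, Finset.card_image_of_injective _ (fun a b h => by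
    simpa [Prod.ext_iff] using h)]



section Cluster

variable {Ξ : V → V → Option (Option L)} (hΞ : IsChromaticClustering Ξ)
variable {x₀ t : V} {c : L} (hpair : Ξ x₀ t = some (some c))

include hΞ hpair

lemma cc_mem_color : ∀ y, y ≠ x₀ → Ξ x₀ y ≠ some none → Ξ x₀ y = some (some c) := by
  intro y hy hmem
  by_cases hyt : y = t
  · subst hyt; exact hpair
  · rcases (hΞ.2.2 x₀ t c hpair y hy hyt).2 with h | h
    · exact h
    · exact absurd h hmem

lemma cc_pair : ∀ a b, a ≠ b → Ξ x₀ a ≠ some none → Ξ x₀ b ≠ some none →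
    Ξ a b = some (some c) := by
  intro a b hab ha hb
  by_cases hax : a = x₀
  · subst hax
    exact cc_mem_color hΞ hpair b (Ne.symm hab) hb
  · by_cases hbx : b = x₀
    · subst hbx
      rw [hΞ.1]
      exact cc_mem_color hΞ hpair a hax ha
    · have hA := cc_mem_color hΞ hpair a hax ha
      have hB := cc_mem_color hΞ hpair b hbx hb
      have := (hΞ.2.2 x₀ a c hA b hbx (Ne.symm hab)).1
      rw [← this]
      exact hB

lemma cc_out : ∀ a b, Ξ x₀ a ≠ some none → Ξ x₀ b = some none → Ξ a b = some none := by
  intro a b ha hb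
  have hbx : b ≠ x₀ := by
    intro h
    rw [h, (hΞ.2.1 x₀ x₀).2 rfl] at hb
    exact nomatch hb
  by_cases hax : a = x₀
  · subst hax; exact hb
  · have hab : a ≠ b := by rintro rfl; rw [hb] at ha; exact ha rfl
    have hA := cc_mem_color hΞ hpair a hax ha
    have := (hΞ.2.2 x₀ a c hA b hbx (Ne.symm hab)).1
    rw [← this]
    exact hb

end Cluster

noncomputable def extractΨ (Φstar : V → V → Option (Option L)) (S : Finset V) (c : L) :
    V → V → Option (Option L) :=
  fun x y => if x = y then none
    else if x ∈ S ∧ y ∈ S then some (some c)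
    else if x ∈ S ∨ y ∈ S then some none
    else Φstar x y

lemma extract_chromatic (Φstar : V → V → Option (Option L)) (S : Finset V) (c : L)
    (h : IsChromaticClustering Φstar) : IsChromaticClustering (extractΨ Φstar S c) := by
  obtain ⟨h1, h2, h3⟩ := h
  have eval : ∀ a b : V, a ≠ b → extractΨ Φstar S c a b =
      (if a ∈ S ∧ b ∈ S then some (some c)
       else if a ∈ S ∨ b ∈ S then some none else Φstar a b) := by
    intro a b hab
    unfold extractΨ
    rw [if_neg hab]
  refine ⟨?_, ?_, ?_⟩
  · intro x y
    by_cases hxy : x = y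
    · simp [extractΨ, hxy]
    · rw [eval x y hxy, eval y x (Ne.symm hxy)]
      by_cases hx : x ∈ S <;> by_cases hy : y ∈ S <;> simp [hx, hy, h1 x y]
  · intro x y
    by_cases hxy : x = y
    · simp [extractΨ, hxy]
    · rw [eval x y hxy]
      constructor
      · intro hh
        split_ifs at hh
        all_goals first
          | exact Option.noConfusion hh
          | exact (h2 x y).1 hh
      · intro hh
        exact absurd hh hxy
  · intro x y c' hxy w hwx hwy
    have hxyne : x ≠ y := by
      intro hh
      rw [hh] at hxy
      unfold extractΨ at hxy
      rw [if_pos rfl] at hxy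
      exact nomatch hxy
    rw [eval x y hxyne] at hxy
    rw [eval x w (Ne.symm hwx), eval y w (Ne.symm hwy)]
    by_cases hS : x ∈ S ∧ y ∈ S
    · rw [if_pos hS] at hxy
      have hc : c = c' := by
        injection hxy with h'
        injection h' with h''
      subst hc
      by_cases hw : w ∈ S
      · simp [hS.1, hS.2, hw]
      · simp [hS.1, hS.2, hw]
    · rw [if_neg hS] at hxy
      by_cases hS2 : x ∈ S ∨ y ∈ S
      · rw [if_pos hS2] at hxy
        exact nomatch hxy
      · rw [if_neg hS2] at hxy
        push_neg at hS2
        by_cases hw : w ∈ S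
        · simp [hS2.1, hS2.2, hw]
        · simp only [if_neg (fun hh : x ∈ S ∧ w ∈ S => hS2.1 hh.1),
            if_neg (fun hh : y ∈ S ∧ w ∈ S => hS2.2 hh.1),
            if_neg (fun hh : x ∈ S ∨ w ∈ S => hh.elim hS2.1 hw),
            if_neg (fun hh : y ∈ S ∨ w ∈ S => hh.elim hS2.2 hw)]
          exact h3 x y c' hxy w hwx hwy

noncomputable def joinΨ (Φstar : V → V → Option (Option L)) (x₀ u : V) (c : L) :
    V → V → Option (Option L) :=
  fun x y => if x = y then none
    else if x = u then (if Φstar x₀ y ≠ some none then some (some c) else some none)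
    else if y = u then (if Φstar x₀ x ≠ some none then some (some c) else some none)
    else Φstar x y

lemma join_chromatic (Φstar : V → V → Option (Option L)) (x₀ t u : V) (c : L)
    (h : IsChromaticClustering Φstar)
    (ht : Φstar x₀ t = some (some c)) (hu : Φstar x₀ u = some none) :
    IsChromaticClustering (joinΨ Φstar x₀ u c) := by
  have hM2 := cc_pair h ht
  have hM3 := cc_out h ht
  obtain ⟨h1, h2, h3⟩ := h
  have eval : ∀ a b : V, a ≠ b → joinΨ Φstar x₀ u c a b =
      (if a = u then (if Φstar x₀ b ≠ some none then some (some c) else some none)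
       else if b = u then (if Φstar x₀ a ≠ some none then some (some c) else some none)
       else Φstar a b) := by
    intro a b hab
    unfold joinΨ
    rw [if_neg hab]
  refine ⟨?_, ?_, ?_⟩
  · intro x y
    by_cases hxy : x = y
    · simp [joinΨ, hxy]
    · rw [eval x y hxy, eval y x (Ne.symm hxy)]
      by_cases hx : x = u
      · subst hx
        simp [Ne.symm hxy]
      · by_cases hy : y = u
        · subst hy
          simp [hx]
        · simp [hx, hy, h1 x y]
  · intro x y
    by_cases hxy : x = y
    · simp [joinΨ, hxy]
    · rw [eval x y hxy]
      constructor
      · intro hh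
        split_ifs at hh
        all_goals first
          | exact Option.noConfusion hh
          | exact (h2 x y).1 hh
      · intro hh
        exact absurd hh hxy
  · intro x y c' hxy w hwx hwy
    have hxyne : x ≠ y := by
      intro hh
      rw [hh] at hxy
      unfold joinΨ at hxy
      rw [if_pos rfl] at hxy
      exact nomatch hxy
    rw [eval x y hxyne] at hxy
    rw [eval x w (Ne.symm hwx), eval y w (Ne.symm hwy)]
    by_cases hx : x = u
    · rw [if_pos hx] at hxy
      rw [if_pos hx]
      have hMy : Φstar x₀ y ≠ some none := by
        intro hh
        rw [if_neg (fun h2 => h2 hh)] at hxy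
        exact nomatch hxy
      rw [if_pos hMy] at hxy
      have hc : c = c' := by
        injection hxy with h'
        injection h' with h''
      subst hc
      have hyu : ¬ y = u := fun hh => hMy (hh ▸ hu)
      have hwu : ¬ w = u := fun hh => hwx (hh.trans hx.symm)
      rw [if_neg hyu, if_neg hwu]
      by_cases hMw : Φstar x₀ w ≠ some none
      · rw [if_pos hMw, hM2 y w (Ne.symm hwy) hMy hMw]
        exact ⟨rfl, Or.inl rfl⟩
      · push_neg at hMw
        rw [if_neg (fun hh => hh hMw), hM3 y w hMy hMw]
        exact ⟨rfl, Or.inr rfl⟩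
    · rw [if_neg hx] at hxy
      rw [if_neg hx]
      by_cases hy : y = u
      · rw [if_pos hy] at hxy
        have hMx : Φstar x₀ x ≠ some none := by
          intro hh
          rw [if_neg (fun h2 => h2 hh)] at hxy
          exact nomatch hxy
        rw [if_pos hMx] at hxy
        have hc : c = c' := by
          injection hxy with h'
          injection h' with h''
        subst hc
        have hwu : ¬ w = u := fun hh => hwy (hh.trans hy.symm)
        rw [if_neg hwu, if_pos hy]
        by_cases hMw : Φstar x₀ w ≠ some none
        · rw [if_pos hMw, hM2 x w (Ne.symm hwx) hMx hMw]
          exact ⟨rfl, Or.inl rfl⟩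
        · push_neg at hMw
          rw [if_neg (fun hh => hh hMw), hM3 x w hMx hMw]
          exact ⟨rfl, Or.inr rfl⟩
      · rw [if_neg hy] at hxy
        rw [if_neg hy]
        by_cases hwu : w = u
        · rw [if_pos hwu, if_pos hwu]
          by_cases hMx : Φstar x₀ x ≠ some none
          · have hMy : Φstar x₀ y ≠ some none := by
              intro hh
              rw [hM3 x y hMx hh] at hxy
              exact nomatch hxy
            have hc : c = c' := by
              have h5 := hM2 x y hxyne hMx hMy
              rw [h5] at hxy
              injection hxy with h'
              injection h' with h''
            subst hc
            rw [if_pos hMx, if_pos hMy]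
            exact ⟨rfl, Or.inl rfl⟩
          · push_neg at hMx
            have hMy : Φstar x₀ y = some none := by
              by_contra hh
              rw [h1 x y, hM3 y x hh hMx] at hxy
              exact nomatch hxy
            rw [if_neg (fun hh => hh hMx), if_neg (fun hh => hh hMy)]
            exact ⟨rfl, Or.inr rfl⟩
        · rw [if_neg hwu, if_neg hwu]
          exact h3 x y c' hxy w hwx hwy



end CCCProof


namespace CCCProof

open Finset

lemma main_hard {V L : Type*} [Fintype V]
    (φ Φ : V → V → Option (Option L))
    (hφsymm : ∀ u v : V, φ u v = φ v u)
    (hφdiag : ∀ u v : V, φ u v = none ↔ u = v)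
    (hΦ : IsChromaticClustering Φ)
    (β : ℝ) (hβ : β = 1 / 10)
    (C : V → Finset V)
    (hC : ∀ u : V, C u = Finset.univ.filter fun v : V => Φ u v ≠ some none)
    (bad : V → Prop)
    (hbad : ∀ u : V, bad u ↔
      ((Finset.univ.filter fun v : V => φ u v ≠ Φ u v).card : ℝ) > β / 2 * (C u).card)
    (badC : V → Prop)
    (hbadC : ∀ u : V, badC u ↔
      ((((C u).filter fun w : V => bad w).card : ℝ) ≥ β / 3 * (C u).card))
    (Φstar : V → V → Option (Option L))
    (hΦstar : IsChromaticClustering Φstar)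
    (hopt : ∀ Ψ : V → V → Option (Option L),
      IsChromaticClustering Ψ → objCCC φ Φstar ≤ objCCC φ Ψ)
    (u v : V) (c : L) (huv : u ≠ v)
    (hval : Φ u v = some (some c))
    (hgu : ¬ bad u) (hgCu : ¬ badC u) (hgv : ¬ bad v) :
    Φstar u v = some (some c) := by
  classical
  have hφdiag' : ∀ x, φ x x = none := fun x => (hφdiag x x).2 rfl
  have hΦdiag' : ∀ x, Φ x x = none := fun x => (hΦ.2.1 x x).2 rfl
  have hSdiag' : ∀ x, Φstar x x = none := fun x => (hΦstar.2.1 x x).2 rfl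
  set Cu := C u with hCu
  have hmemC : ∀ w, w ∈ Cu ↔ Φ u w ≠ some none := by
    intro w
    rw [hCu, hC u, Finset.mem_filter]
    simp only [Finset.mem_univ, true_and]
  have huC : u ∈ Cu := (hmemC u).2 (by rw [hΦdiag' u]; exact fun h => nomatch h)
  have hvC : v ∈ Cu := (hmemC v).2
    (by rw [hval]; exact fun h => nomatch h)
  have hCpair : ∀ x y, x ∈ Cu → y ∈ Cu → x ≠ y → Φ x y = some (some c) := fun x y hx hy hxy =>
    cc_pair hΦ hval x y hxy ((hmemC x).1 hx) ((hmemC y).1 hy)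
  have hCout : ∀ x y, x ∈ Cu → y ∉ Cu → Φ x y = some none := fun x y hx hy =>
    cc_out hΦ hval x y ((hmemC x).1 hx) (by by_contra hh; exact hy ((hmemC y).2 hh))
  have hCeq : ∀ x, x ∈ Cu → C x = Cu := by
    intro x hx
    ext y
    rw [hC x, Finset.mem_filter]
    simp only [Finset.mem_univ, true_and]
    constructor
    · intro hy
      by_contra hyC
      rw [hCout x y hx hyC] at hy
      exact hy rfl
    · intro hy
      by_cases hxy : x = y
      · rw [← hxy, hΦdiag' x]
        exact fun h => nomatch h
      · rw [hCpair x y hx hy hxy]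
        exact fun h => nomatch h
  set S := Cu.filter (fun w => ¬ bad w) with hS
  set Bset := Cu.filter bad with hB
  have hSsubC : S ⊆ Cu := by rw [hS]; exact Finset.filter_subset _ _
  have hSB : Bset.card + S.card = Cu.card := by
    rw [hB, hS]
    exact Finset.card_filter_add_card_filter_not (p := bad)
  have huS : u ∈ S := by rw [hS]; exact Finset.mem_filter.2 ⟨huC, hgu⟩
  have hvS : v ∈ S := by rw [hS]; exact Finset.mem_filter.2 ⟨hvC, hgv⟩
  have hn2 : 2 ≤ Cu.card := by
    have hsub : ({u, v} : Finset V) ⊆ Cu := by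
      intro x hx
      rcases Finset.mem_insert.1 hx with rfl | hx
      · exact huC
      · rw [Finset.mem_singleton] at hx; subst hx; exact hvC
    have h2 := Finset.card_le_card hsub
    rwa [Finset.card_insert_of_notMem (by rwa [Finset.mem_singleton]),
      Finset.card_singleton] at h2
  have hnR2 : (2 : ℝ) ≤ (Cu.card : ℝ) := by exact_mod_cast hn2
  have hnRpos : (0 : ℝ) < (Cu.card : ℝ) := by linarith
  have hdle : ∀ x, x ∈ S → (Drow φ Φ x : ℝ) ≤ (Cu.card : ℝ) / 20 := by
    intro x hxS
    have hxC : x ∈ Cu := hSsubC hxS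
    have hxS' := hxS
    rw [hS, Finset.mem_filter] at hxS'
    have hnb := hxS'.2
    rw [hbad x] at hnb
    push_neg at hnb
    rw [hCeq x hxC] at hnb
    have hβ2 : β / 2 = 1 / 20 := by rw [hβ]; norm_num
    rw [hβ2] at hnb
    have hcast : (Drow φ Φ x : ℝ)
        = ((Finset.univ.filter fun y : V => φ x y ≠ Φ x y).card : ℝ) := rfl
    rw [hcast]
    calc ((Finset.univ.filter fun y : V => φ x y ≠ Φ x y).card : ℝ)
        ≤ 1 / 20 * (Cu.card : ℝ) := hnb
      _ = (Cu.card : ℝ) / 20 := by ring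
  have hbR : ((Bset.card : ℕ) : ℝ) < (Cu.card : ℝ) / 30 := by
    have hnb := hgCu
    rw [hbadC u] at hnb
    push_neg at hnb
    rw [← hCu] at hnb
    have hβ3 : β / 3 = 1 / 30 := by rw [hβ]; norm_num
    rw [hβ3, ← hB] at hnb
    calc ((Bset.card : ℕ) : ℝ) < 1 / 30 * (Cu.card : ℝ) := hnb
      _ = (Cu.card : ℝ) / 30 := by ring
  have hbnn : (0 : ℝ) ≤ ((Bset.card : ℕ) : ℝ) := Nat.cast_nonneg _
  have hspos : (0 : ℝ) < ((S.card : ℕ) : ℝ) := by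
    have h0 : 0 < S.card := Finset.card_pos.2 ⟨u, huS⟩
    exact_mod_cast h0
  have hsle : ((S.card : ℕ) : ℝ) ≤ (Cu.card : ℝ) := by
    exact_mod_cast Finset.card_le_card hSsubC
  have hsbn : ((Bset.card : ℕ) : ℝ) + ((S.card : ℕ) : ℝ) = (Cu.card : ℝ) := by
    exact_mod_cast hSB
  -- extraction comparison
  have hΨeC : IsChromaticClustering (extractΨ Φstar S c) := extract_chromatic Φstar S c hΦstar
  have hΨediag : ∀ x, extractΨ Φstar S c x x = none := by
    intro x
    unfold extractΨ
    rw [if_pos rfl]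
  have hDordle : Dord φ Φstar ≤ Dord φ (extractΨ Φstar S c) := by
    rw [Dord_eq_two_mul_obj φ Φstar hφsymm hΦstar.1 (fun x => by rw [hφdiag' x, hSdiag' x]),
      Dord_eq_two_mul_obj φ _ hφsymm hΨeC.1 (fun x => by rw [hφdiag' x, hΨediag x])]
    exact Nat.mul_le_mul_left 2 (hopt _ hΨeC)
  have hDRe : DR φ Φstar S = DR φ (extractΨ Φstar S c) S := by
    apply DR_congr
    intro x y hx hy
    unfold extractΨ
    by_cases hxy : x = y
    · rw [if_pos hxy]
      exact (hΦstar.2.1 x y).2 hxy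
    · rw [if_neg hxy, if_neg (fun hh => hx hh.1), if_neg (fun hh => hh.elim hx hy)]
  have hQS : (DTs φ Φstar S).card ≤ (DTs φ (extractΨ Φstar S c) S).card := by
    have e1 := Dord_split φ Φstar S
    have e2 := Dord_split φ (extractΨ Φstar S c) S
    omega
  have hrowΨe : ∀ x, x ∈ S → Drow φ (extractΨ Φstar S c) x ≤ Drow φ Φ x + Bset.card := by
    intro x hxS
    have hxC : x ∈ Cu := hSsubC hxS
    have hsub : (Finset.univ.filter fun y => φ x y ≠ extractΨ Φstar S c x y) ⊆
        (Finset.univ.filter fun y => φ x y ≠ Φ x y) ∪ Bset := by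
      intro y hy
      rw [Finset.mem_filter] at hy
      have hpay := hy.2
      rw [Finset.mem_union, Finset.mem_filter]
      by_cases hxy : x = y
      · exfalso
        apply hpay
        rw [← hxy, hφdiag' x]
        unfold extractΨ
        rw [if_pos rfl]
      · by_cases hyS : y ∈ S
        · left
          refine ⟨Finset.mem_univ y, ?_⟩
          have hev : extractΨ Φstar S c x y = some (some c) := by
            unfold extractΨ
            rw [if_neg hxy, if_pos ⟨hxS, hyS⟩]
          rw [hev] at hpay
          rw [hCpair x y hxC (hSsubC hyS) hxy]
          exact hpay
        · by_cases hyC : y ∈ Cu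
          · right
            rw [hB, Finset.mem_filter]
            refine ⟨hyC, ?_⟩
            by_contra hby
            exact hyS (by rw [hS]; exact Finset.mem_filter.2 ⟨hyC, hby⟩)
          · left
            refine ⟨Finset.mem_univ y, ?_⟩
            have hev : extractΨ Φstar S c x y = some none := by
              unfold extractΨ
              rw [if_neg hxy, if_neg (fun hh => hyS hh.2), if_pos (Or.inl hxS)]
            rw [hev] at hpay
            rw [hCout x y hxC hyC]
            exact hpay
    calc Drow φ (extractΨ Φstar S c) x
        ≤ ((Finset.univ.filter fun y => φ x y ≠ Φ x y) ∪ Bset).card :=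
          Finset.card_le_card hsub
      _ ≤ Drow φ Φ x + Bset.card := Finset.card_union_le _ _
  have hQbound : ((DTs φ Φstar S).card : ℝ) ≤
      2 * ((S.card : ℝ) * ((Cu.card : ℝ) / 20) + (S.card : ℝ) * (Bset.card : ℝ)) := by
    have h2 := DTs_card_le φ (extractΨ Φstar S c) S hφsymm hΨeC.1
    have h3 : ((∑ x ∈ S, Drow φ (extractΨ Φstar S c) x : ℕ) : ℝ) ≤
        (S.card : ℝ) * ((Cu.card : ℝ) / 20) + (S.card : ℝ) * (Bset.card : ℝ) := by
      have hc : ((∑ x ∈ S, Drow φ (extractΨ Φstar S c) x : ℕ) : ℝ)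
          = ∑ x ∈ S, ((Drow φ (extractΨ Φstar S c) x : ℕ) : ℝ) := by push_cast; ring
      rw [hc]
      calc ∑ x ∈ S, ((Drow φ (extractΨ Φstar S c) x : ℕ) : ℝ)
          ≤ ∑ x ∈ S, ((Cu.card : ℝ) / 20 + (Bset.card : ℝ)) := by
            apply Finset.sum_le_sum
            intro x hx
            have h4 : ((Drow φ (extractΨ Φstar S c) x : ℕ) : ℝ) ≤
                ((Drow φ Φ x + Bset.card : ℕ) : ℝ) := by exact_mod_cast hrowΨe x hx
            push_cast at h4
            have h5 := hdle x hx
            linarith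
        _ = (S.card : ℝ) * ((Cu.card : ℝ) / 20 + (Bset.card : ℝ)) := by
            rw [Finset.sum_const, nsmul_eq_mul]
        _ = (S.card : ℝ) * ((Cu.card : ℝ) / 20) + (S.card : ℝ) * (Bset.card : ℝ) := by ring
    have h5 : ((DTs φ (extractΨ Φstar S c) S).card : ℝ) ≤
        2 * ((∑ x ∈ S, Drow φ (extractΨ Φstar S c) x : ℕ) : ℝ) := by exact_mod_cast h2
    have h0 : ((DTs φ Φstar S).card : ℝ) ≤ ((DTs φ (extractΨ Φstar S c) S).card : ℝ) := by
      exact_mod_cast hQS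
    linarith
  -- counting inside S
  have hsumd : ((∑ x ∈ S, Drow φ Φ x : ℕ) : ℝ) ≤ (S.card : ℝ) * ((Cu.card : ℝ) / 20) := by
    have hc : ((∑ x ∈ S, Drow φ Φ x : ℕ) : ℝ) = ∑ x ∈ S, ((Drow φ Φ x : ℕ) : ℝ) := by
      push_cast; ring
    rw [hc]
    calc ∑ x ∈ S, ((Drow φ Φ x : ℕ) : ℝ) ≤ ∑ x ∈ S, ((Cu.card : ℝ) / 20) :=
        Finset.sum_le_sum (fun x hx => hdle x hx)
      _ = (S.card : ℝ) * ((Cu.card : ℝ) / 20) := by rw [Finset.sum_const, nsmul_eq_mul]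
  set fne := (S ×ˢ S).filter (fun p : V × V => p.1 ≠ p.2) with hfne
  have hfnecard : S.card * S.card ≤ fne.card + S.card := by
    have hsplit := Finset.card_filter_add_card_filter_not
      (s := S ×ˢ S) (p := fun p : V × V => p.1 ≠ p.2)
    rw [Finset.card_product] at hsplit
    have hdiagle : ((S ×ˢ S).filter (fun p : V × V => ¬ p.1 ≠ p.2)).card ≤ S.card := by
      have hsub2 : ((S ×ˢ S).filter (fun p : V × V => ¬ p.1 ≠ p.2)) ⊆
          S.image (fun x => (x, x)) := by
        rintro ⟨a, b⟩ hp
        rw [Finset.mem_filter, Finset.mem_product] at hp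
        have hab : a = b := not_not.1 hp.2
        rw [Finset.mem_image]
        exact ⟨a, hp.1.1, by rw [hab]⟩
      calc _ ≤ (S.image fun x => (x, x)).card := Finset.card_le_card hsub2
        _ ≤ S.card := Finset.card_image_le
    rw [← hfne] at hsplit
    omega
  set T1 := fne.filter (fun p : V × V => φ p.1 p.2 = some (some c)) with hT1
  have hT1W : fne.card ≤ T1.card + ∑ x ∈ S, Drow φ Φ x := by
    have hsplit := Finset.card_filter_add_card_filter_not
      (s := fne) (p := fun p : V × V => φ p.1 p.2 = some (some c))
    rw [← hT1] at hsplit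
    have hW : (fne.filter (fun p : V × V => ¬ φ p.1 p.2 = some (some c))).card ≤
        ∑ x ∈ S, Drow φ Φ x := by
      have hsub2 : (fne.filter (fun p : V × V => ¬ φ p.1 p.2 = some (some c))) ⊆
          ((S ×ˢ (Finset.univ : Finset V)).filter fun p => φ p.1 p.2 ≠ Φ p.1 p.2) := by
        rintro ⟨a, b⟩ hp
        rw [Finset.mem_filter, hfne, Finset.mem_filter, Finset.mem_product] at hp
        obtain ⟨⟨⟨haS, hbS⟩, hab⟩, hnc⟩ := hp
        rw [Finset.mem_filter, Finset.mem_product]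
        refine ⟨⟨haS, Finset.mem_univ b⟩, ?_⟩
        rw [hCpair a b (hSsubC haS) (hSsubC hbS) hab]
        exact hnc
      calc _ ≤ _ := Finset.card_le_card hsub2
        _ = ∑ x ∈ S, Drow φ Φ x := card_filter_prod_ne S Finset.univ φ Φ
    omega
  obtain ⟨x₀, hx₀S, hx₀max⟩ := Finset.exists_max_image S
    (fun x => (S.filter fun y => Φstar x y = some (some c)).card) ⟨u, huS⟩
  have hT1le : T1.card ≤ (DTs φ Φstar S).card +
      S.card * (S.filter fun y => Φstar x₀ y = some (some c)).card := by
    have h1 := Finset.card_le_card_sdiff_add_card (s := T1)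
      (t := (S ×ˢ S).filter (fun p : V × V => Φstar p.1 p.2 = some (some c)))
    have h2 : T1 \ ((S ×ˢ S).filter (fun p : V × V => Φstar p.1 p.2 = some (some c))) ⊆
        DTs φ Φstar S := by
      rintro ⟨a, b⟩ hp
      rw [Finset.mem_sdiff] at hp
      obtain ⟨hpT1, hpT2⟩ := hp
      rw [hT1, Finset.mem_filter, hfne, Finset.mem_filter, Finset.mem_product] at hpT1
      obtain ⟨⟨⟨haS, hbS⟩, hab⟩, hφc⟩ := hpT1
      have hnst : Φstar a b ≠ some (some c) := by
        intro hh
        exact hpT2 (by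
          rw [Finset.mem_filter, Finset.mem_product]
          exact ⟨⟨haS, hbS⟩, hh⟩)
      unfold DTs
      rw [Finset.mem_filter, Finset.mem_product]
      refine ⟨⟨Finset.mem_univ a, Finset.mem_univ b⟩, ?_, Or.inl haS⟩
      rw [hφc]
      exact fun hh => hnst hh.symm
    have h3 : ((S ×ˢ S).filter (fun p : V × V => Φstar p.1 p.2 = some (some c))).card ≤
        S.card * (S.filter fun y => Φstar x₀ y = some (some c)).card := by
      have h4 := card_filter_prod_eq S S Φstar Φstar (some (some c))
      rw [h4]
      calc ∑ x ∈ S, (S.filter fun y => Φstar x y = some (some c)).card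
          ≤ ∑ _x ∈ S, (S.filter fun y => Φstar x₀ y = some (some c)).card :=
            Finset.sum_le_sum (fun x hx => hx₀max x hx)
        _ = S.card * (S.filter fun y => Φstar x₀ y = some (some c)).card := by
            rw [Finset.sum_const, smul_eq_mul]
    have h5 := Finset.card_le_card h2
    omega
  have ht0R : ((S.card : ℕ) : ℝ) ≤ 1 + 3 * (Cu.card : ℝ) / 20 +
      (((S.filter fun y => Φstar x₀ y = some (some c)).card : ℕ) : ℝ) +
      2 * ((Bset.card : ℕ) : ℝ) := by
    have c1 : ((S.card * S.card : ℕ) : ℝ) ≤ ((T1.card : ℕ) : ℝ) +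
        ((∑ x ∈ S, Drow φ Φ x : ℕ) : ℝ) + ((S.card : ℕ) : ℝ) := by
      have cN : S.card * S.card ≤ T1.card + (∑ x ∈ S, Drow φ Φ x) + S.card := by omega
      exact_mod_cast cN
    have c2 : ((T1.card : ℕ) : ℝ) ≤ ((DTs φ Φstar S).card : ℝ) +
        ((S.card : ℕ) : ℝ) * (((S.filter fun y => Φstar x₀ y = some (some c)).card : ℕ) : ℝ) := by
      have := hT1le
      have c2' : ((T1.card : ℕ) : ℝ) ≤ ((DTs φ Φstar S).card : ℝ) +
          ((S.card * (S.filter fun y => Φstar x₀ y = some (some c)).card : ℕ) : ℝ) := by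
        exact_mod_cast this
      push_cast at c2' ⊢
      linarith
    have hmul : ((S.card : ℕ) : ℝ) * ((S.card : ℕ) : ℝ) ≤ ((S.card : ℕ) : ℝ) *
        (1 + 3 * (Cu.card : ℝ) / 20 +
          (((S.filter fun y => Φstar x₀ y = some (some c)).card : ℕ) : ℝ) +
          2 * ((Bset.card : ℕ) : ℝ)) := by
      have c1' : ((S.card : ℕ) : ℝ) * ((S.card : ℕ) : ℝ) ≤ ((T1.card : ℕ) : ℝ) +
          ((∑ x ∈ S, Drow φ Φ x : ℕ) : ℝ) + ((S.card : ℕ) : ℝ) := by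
        push_cast at c1 ⊢
        linarith
      nlinarith [hsumd, hQbound, c2]
    exact le_of_mul_le_mul_left hmul hspos
  set MS := S.filter (fun y => Φstar x₀ y ≠ some none) with hMS
  have hMSsubS : MS ⊆ S := by rw [hMS]; exact Finset.filter_subset _ _
  have hx₀MS : x₀ ∈ MS := by
    rw [hMS]
    exact Finset.mem_filter.2 ⟨hx₀S, by
      rw [hSdiag' x₀]; exact fun h => nomatch h⟩
  have hmsge : (S.filter fun y => Φstar x₀ y = some (some c)).card + 1 ≤ MS.card := by
    have hsub : insert x₀ (S.filter fun y => Φstar x₀ y = some (some c)) ⊆ MS := by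
      intro y hy
      rcases Finset.mem_insert.1 hy with rfl | hy
      · exact hx₀MS
      · rw [Finset.mem_filter] at hy
        rw [hMS]
        exact Finset.mem_filter.2 ⟨hy.1, by
          rw [hy.2]; exact fun h => nomatch h⟩
    have hnotmem : x₀ ∉ (S.filter fun y => Φstar x₀ y = some (some c)) := by
      rw [Finset.mem_filter]
      rintro ⟨-, hh⟩
      rw [hSdiag' x₀] at hh
      exact nomatch hh
    calc (S.filter fun y => Φstar x₀ y = some (some c)).card + 1
        = (insert x₀ (S.filter fun y => Φstar x₀ y = some (some c))).card := by
          rw [Finset.card_insert_of_notMem hnotmem]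
      _ ≤ MS.card := Finset.card_le_card hsub
  have hms34 : 3 * (Cu.card : ℝ) / 4 < ((MS.card : ℕ) : ℝ) := by
    have h1 : (((S.filter fun y => Φstar x₀ y = some (some c)).card : ℕ) : ℝ) + 1 ≤
        ((MS.card : ℕ) : ℝ) := by exact_mod_cast hmsge
    linarith [ht0R, hsbn, hbR]
  have ht0pos : 0 < (S.filter fun y => Φstar x₀ y = some (some c)).card := by
    by_contra hh
    push_neg at hh
    have h0 : (S.filter fun y => Φstar x₀ y = some (some c)).card = 0 := by omega
    have h0R : (((S.filter fun y => Φstar x₀ y = some (some c)).card : ℕ) : ℝ) = 0 := by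
      rw [h0]; norm_num
    linarith [ht0R, hsbn, hbR, hnR2]
  obtain ⟨t1, ht1mem⟩ := Finset.card_pos.1 ht0pos
  rw [Finset.mem_filter] at ht1mem
  have hM2 := cc_pair hΦstar ht1mem.2
  have hM3 := cc_out hΦstar ht1mem.2
  set MnotC := Finset.univ.filter (fun y => Φstar x₀ y ≠ some none ∧ y ∉ Cu) with hMnotC
  have hmsmc : ((MS.card : ℕ) : ℝ) * ((MnotC.card : ℕ) : ℝ) ≤
      ((DTs φ Φstar S).card : ℝ) + ((MS.card : ℕ) : ℝ) * ((Cu.card : ℝ) / 20) := by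
    have hsplit := Finset.card_filter_add_card_filter_not
      (s := MS ×ˢ MnotC) (p := fun p : V × V => φ p.1 p.2 ≠ Φstar p.1 p.2)
    rw [Finset.card_product] at hsplit
    have hUbad : ((MS ×ˢ MnotC).filter
        (fun p : V × V => φ p.1 p.2 ≠ Φstar p.1 p.2)).card ≤ (DTs φ Φstar S).card := by
      apply Finset.card_le_card
      rintro ⟨a, b⟩ hp
      rw [Finset.mem_filter, Finset.mem_product] at hp
      obtain ⟨⟨haMS, hbMnC⟩, hpay⟩ := hp
      have haS : a ∈ S := hMSsubS haMS
      unfold DTs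
      rw [Finset.mem_filter, Finset.mem_product]
      exact ⟨⟨Finset.mem_univ a, Finset.mem_univ b⟩, hpay, Or.inl haS⟩
    have hUgood : ((MS ×ˢ MnotC).filter
        (fun p : V × V => ¬ (φ p.1 p.2 ≠ Φstar p.1 p.2))).card ≤
        ∑ x ∈ MS, Drow φ Φ x := by
      have hsub2 : ((MS ×ˢ MnotC).filter (fun p : V × V => ¬ (φ p.1 p.2 ≠ Φstar p.1 p.2))) ⊆
          ((MS ×ˢ (Finset.univ : Finset V)).filter fun p => φ p.1 p.2 ≠ Φ p.1 p.2) := by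
        rintro ⟨a, b⟩ hp
        rw [Finset.mem_filter, Finset.mem_product] at hp
        obtain ⟨⟨haMS, hbMnC⟩, hnp⟩ := hp
        have heq : φ a b = Φstar a b := not_not.1 hnp
        have haMS' := haMS
        rw [hMS, Finset.mem_filter] at haMS'
        obtain ⟨haS, haM⟩ := haMS'
        have hbMnC' := hbMnC
        rw [hMnotC, Finset.mem_filter] at hbMnC'
        obtain ⟨-, hbM, hbC⟩ := hbMnC'
        have haC : a ∈ Cu := hSsubC haS
        have hab : a ≠ b := fun hh => hbC (hh ▸ haC)
        rw [Finset.mem_filter, Finset.mem_product]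
        refine ⟨⟨haMS, Finset.mem_univ b⟩, ?_⟩
        rw [heq, hM2 a b hab haM hbM, hCout a b haC hbC]
        exact fun hh => nomatch hh
      calc _ ≤ _ := Finset.card_le_card hsub2
        _ = ∑ x ∈ MS, Drow φ Φ x := card_filter_prod_ne MS Finset.univ φ Φ
    have hsum2 : ((∑ x ∈ MS, Drow φ Φ x : ℕ) : ℝ) ≤
        ((MS.card : ℕ) : ℝ) * ((Cu.card : ℝ) / 20) := by
      have hc : ((∑ x ∈ MS, Drow φ Φ x : ℕ) : ℝ) = ∑ x ∈ MS, ((Drow φ Φ x : ℕ) : ℝ) := by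
        push_cast; ring
      rw [hc]
      calc ∑ x ∈ MS, ((Drow φ Φ x : ℕ) : ℝ) ≤ ∑ x ∈ MS, ((Cu.card : ℝ) / 20) :=
          Finset.sum_le_sum (fun x hx => hdle x (hMSsubS hx))
        _ = ((MS.card : ℕ) : ℝ) * ((Cu.card : ℝ) / 20) := by
            rw [Finset.sum_const, nsmul_eq_mul]
    have hNat : MS.card * MnotC.card ≤ (DTs φ Φstar S).card + ∑ x ∈ MS, Drow φ Φ x := by
      omega
    have hNatR : ((MS.card * MnotC.card : ℕ) : ℝ) ≤ ((DTs φ Φstar S).card : ℝ) +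
        ((∑ x ∈ MS, Drow φ Φ x : ℕ) : ℝ) := by exact_mod_cast hNat
    push_cast at hNatR hsum2 ⊢
    linarith [hsum2]
  have hQR6 : ((DTs φ Φstar S).card : ℝ) ≤ (Cu.card : ℝ) * (Cu.card : ℝ) / 6 := by
    have e1 : ((S.card : ℕ) : ℝ) * ((Cu.card : ℝ) / 20) ≤
        (Cu.card : ℝ) * ((Cu.card : ℝ) / 20) := by nlinarith
    have e2 : ((S.card : ℕ) : ℝ) * ((Bset.card : ℕ) : ℝ) ≤
        (Cu.card : ℝ) * ((Cu.card : ℝ) / 30) := by nlinarith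
    calc ((DTs φ Φstar S).card : ℝ)
        ≤ 2 * ((S.card : ℝ) * ((Cu.card : ℝ) / 20) + (S.card : ℝ) * (Bset.card : ℝ)) := hQbound
      _ ≤ 2 * ((Cu.card : ℝ) * ((Cu.card : ℝ) / 20) + (Cu.card : ℝ) * ((Cu.card : ℝ) / 30)) := by
          linarith
      _ = (Cu.card : ℝ) * (Cu.card : ℝ) / 6 := by ring
  have hmc : ((MnotC.card : ℕ) : ℝ) ≤ 2 * (Cu.card : ℝ) / 9 + (Cu.card : ℝ) / 20 := by
    have h1 : 3 * (Cu.card : ℝ) / 4 * (((MnotC.card : ℕ) : ℝ) - (Cu.card : ℝ) / 20) ≤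
        (Cu.card : ℝ) * (Cu.card : ℝ) / 6 := by
      rcases le_or_gt ((Cu.card : ℝ) / 20) ((MnotC.card : ℕ) : ℝ) with h | h
      · have h2 : 3 * (Cu.card : ℝ) / 4 * (((MnotC.card : ℕ) : ℝ) - (Cu.card : ℝ) / 20) ≤
            ((MS.card : ℕ) : ℝ) * (((MnotC.card : ℕ) : ℝ) - (Cu.card : ℝ) / 20) :=
          mul_le_mul_of_nonneg_right (le_of_lt hms34) (by linarith)
        nlinarith [hmsmc, hQR6]
      · have h2 : 3 * (Cu.card : ℝ) / 4 * (((MnotC.card : ℕ) : ℝ) - (Cu.card : ℝ) / 20) ≤ 0 := by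
          nlinarith
        nlinarith [hQR6, mul_self_nonneg ((Cu.card : ℝ))]
    have h3 : (Cu.card : ℝ) * ((MnotC.card : ℕ) : ℝ) ≤
        (Cu.card : ℝ) * (2 * (Cu.card : ℝ) / 9 + (Cu.card : ℝ) / 20) := by nlinarith [h1]
    exact le_of_mul_le_mul_left h3 hnRpos
  -- Lemma A: every good vertex is in the big cluster
  have hA : ∀ w, w ∈ S → Φstar x₀ w ≠ some none := by
    intro u' hu'S
    by_contra hcon
    have hu'C : u' ∈ Cu := hSsubC hu'S
    set MC := Cu.filter (fun y => Φstar x₀ y ≠ some none) with hMC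
    have hMSsubMC : MS ⊆ MC := by
      intro y hy
      rw [hMS, Finset.mem_filter] at hy
      rw [hMC, Finset.mem_filter]
      exact ⟨hSsubC hy.1, hy.2⟩
    have hccms : ((MS.card : ℕ) : ℝ) ≤ ((MC.card : ℕ) : ℝ) := by
      exact_mod_cast Finset.card_le_card hMSsubMC
    have hMCsub : MC ⊆ Cu.erase u' := by
      intro y hy
      rw [hMC, Finset.mem_filter] at hy
      rw [Finset.mem_erase]
      exact ⟨fun hh => hy.2 (by rw [hh]; exact hcon), hy.1⟩
    have hek : (Cu.erase u').card + 1 = Cu.card := by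
      rw [Finset.card_erase_of_mem hu'C]
      omega
    have hrowStar : MC.card ≤ Drow φ Φstar u' + Drow φ Φ u' := by
      have hsplit := Finset.card_filter_add_card_filter_not
        (s := MC) (p := fun y => φ u' y = Φ u' y)
      have hAgr : (MC.filter (fun y => φ u' y = Φ u' y)) ⊆
          (Finset.univ.filter fun y => φ u' y ≠ Φstar u' y) := by
        intro y hy
        rw [Finset.mem_filter] at hy
        obtain ⟨hyMC, heq⟩ := hy
        rw [hMC, Finset.mem_filter] at hyMC
        obtain ⟨hyC, hyM⟩ := hyMC
        have hyu' : y ≠ u' := fun hh => hyM (by rw [hh]; exact hcon)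
        have hst : Φstar u' y = some none := by
          rw [hΦstar.1 u' y]
          exact hM3 y u' hyM hcon
        rw [Finset.mem_filter]
        refine ⟨Finset.mem_univ y, ?_⟩
        rw [hst, heq, hCpair u' y hu'C hyC (Ne.symm hyu')]
        exact fun hh => nomatch hh
      have hDis : (MC.filter (fun y => ¬ (φ u' y = Φ u' y))) ⊆
          (Finset.univ.filter fun y => φ u' y ≠ Φ u' y) := by
        intro y hy
        rw [Finset.mem_filter] at hy ⊢
        exact ⟨Finset.mem_univ y, hy.2⟩
      have c1 := Finset.card_le_card hAgr
      have c2 := Finset.card_le_card hDis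
      unfold Drow
      omega
    have hrowJ : Drow φ (joinΨ Φstar x₀ u' c) u' + MC.card ≤
        MnotC.card + (Cu.erase u').card + Drow φ Φ u' := by
      have hsub : (Finset.univ.filter fun y => φ u' y ≠ joinΨ Φstar x₀ u' c u' y) ⊆
          (MnotC ∪ ((Cu.erase u') \ MC)) ∪ (Finset.univ.filter fun y => φ u' y ≠ Φ u' y) := by
        intro y hy
        rw [Finset.mem_filter] at hy
        have hpay := hy.2
        by_cases hyu : u' = y
        · exfalso
          apply hpay
          rw [← hyu, hφdiag']
          unfold joinΨ
          rw [if_pos rfl]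
        · have hev : joinΨ Φstar x₀ u' c u' y =
              (if Φstar x₀ y ≠ some none then some (some c) else some none) := by
            unfold joinΨ
            rw [if_neg hyu, if_pos rfl]
          rw [Finset.mem_union, Finset.mem_union]
          by_cases hyM : Φstar x₀ y ≠ some none
          · rw [if_pos hyM] at hev
            by_cases hyC : y ∈ Cu
            · right
              rw [Finset.mem_filter]
              refine ⟨Finset.mem_univ y, ?_⟩
              rw [hCpair u' y hu'C hyC hyu]
              rw [hev] at hpay
              exact hpay
            · left; left
              rw [hMnotC, Finset.mem_filter]
              exact ⟨Finset.mem_univ y, hyM, hyC⟩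
          · rw [if_neg hyM] at hev
            push_neg at hyM
            by_cases hyC : y ∈ Cu
            · left; right
              rw [Finset.mem_sdiff, Finset.mem_erase]
              refine ⟨⟨fun hh => hyu hh.symm, hyC⟩, ?_⟩
              rw [hMC, Finset.mem_filter]
              rintro ⟨-, hh⟩
              exact hh hyM
            · right
              rw [Finset.mem_filter]
              refine ⟨Finset.mem_univ y, ?_⟩
              rw [hCout u' y hu'C hyC]
              rw [hev] at hpay
              exact hpay
      have hcard1 : Drow φ (joinΨ Φstar x₀ u' c) u' ≤
          (MnotC ∪ ((Cu.erase u') \ MC)).card + Drow φ Φ u' := by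
        calc Drow φ (joinΨ Φstar x₀ u' c) u' ≤ _ := Finset.card_le_card hsub
          _ ≤ _ := Finset.card_union_le _ _
      have hcard2 : (MnotC ∪ ((Cu.erase u') \ MC)).card ≤
          MnotC.card + ((Cu.erase u') \ MC).card := Finset.card_union_le _ _
      have hcard3 : ((Cu.erase u') \ MC).card + MC.card = (Cu.erase u').card :=
        Finset.card_sdiff_add_card_eq_card hMCsub
      omega
    -- numeric strict comparison
    have hdu' := hdle u' hu'S
    have hekR : (((Cu.erase u').card : ℕ) : ℝ) = (Cu.card : ℝ) - 1 := by
      have : ((((Cu.erase u').card + 1 : ℕ)) : ℝ) = (Cu.card : ℝ) := by exact_mod_cast hek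
      push_cast at this
      linarith
    have hrowStarR : ((MC.card : ℕ) : ℝ) ≤ ((Drow φ Φstar u' : ℕ) : ℝ) +
        ((Drow φ Φ u' : ℕ) : ℝ) := by exact_mod_cast hrowStar
    have hrowJR : ((Drow φ (joinΨ Φstar x₀ u' c) u' : ℕ) : ℝ) + ((MC.card : ℕ) : ℝ) ≤
        ((MnotC.card : ℕ) : ℝ) + ((Cu.card : ℝ) - 1) + ((Drow φ Φ u' : ℕ) : ℝ) := by
      have hc : ((Drow φ (joinΨ Φstar x₀ u' c) u' + MC.card : ℕ) : ℝ) ≤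
          ((MnotC.card + (Cu.erase u').card + Drow φ Φ u' : ℕ) : ℝ) := by exact_mod_cast hrowJ
      push_cast at hc
      rw [hekR] at hc
      linarith
    have hstrict : Drow φ (joinΨ Φstar x₀ u' c) u' < Drow φ Φstar u' := by
      have hx : ((Drow φ (joinΨ Φstar x₀ u' c) u' : ℕ) : ℝ) <
          ((Drow φ Φstar u' : ℕ) : ℝ) := by
        linarith [hrowStarR, hrowJR, hms34, hccms, hmc, hdu', hnR2]
      exact_mod_cast hx
    have hJC := join_chromatic Φstar x₀ t1 u' c hΦstar ht1mem.2 hcon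
    have hJdiag : ∀ x, joinΨ Φstar x₀ u' c x x = none := by
      intro x
      unfold joinΨ
      rw [if_pos rfl]
    have hDord2 : Dord φ Φstar ≤ Dord φ (joinΨ Φstar x₀ u' c) := by
      rw [Dord_eq_two_mul_obj φ Φstar hφsymm hΦstar.1 (fun x => by rw [hφdiag' x, hSdiag' x]),
        Dord_eq_two_mul_obj φ _ hφsymm hJC.1 (fun x => by rw [hφdiag' x, hJdiag x])]
      exact Nat.mul_le_mul_left 2 (hopt _ hJC)
    have hDRj : DR φ Φstar {u'} = DR φ (joinΨ Φstar x₀ u' c) {u'} := by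
      apply DR_congr
      intro x y hx hy
      rw [Finset.mem_singleton] at hx hy
      unfold joinΨ
      by_cases hxy : x = y
      · rw [if_pos hxy]
        exact (hΦstar.2.1 x y).2 hxy
      · rw [if_neg hxy, if_neg hx, if_neg hy]
    have e1 := Dord_split φ Φstar {u'}
    have e2 := Dord_split φ (joinΨ Φstar x₀ u' c) {u'}
    have e3 := DTs_card_singleton φ Φstar u' hφsymm hΦstar.1
      (by rw [hφdiag' u', hSdiag' u'])
    have e4 := DTs_card_singleton φ (joinΨ Φstar x₀ u' c) u' hφsymm hJC.1
      (by rw [hφdiag' u', hJdiag u'])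
    omega
  exact hM2 u v huv (hA u huS) (hA v hvS)

end CCCProof

/-- with `β = 1/10`, for any chromatic clustering `Φ`, the atom clustering
`Φᵖ` produced by the marking procedure dominates every optimal chromatic clustering `Φ*`:
`Φ*(u,v) ≤ Φᵖ(u,v)` for all `u, v` (so every non-singleton atom lies inside a single
cluster of `Φ*` of the same color). -/
theorem optimal_clustering_respects_atoms {V L : Type*} [Fintype V]
    (φ Φ : V → V → Option (Option L))
    (hφsymm : ∀ u v : V, φ u v = φ v u)
    (hφdiag : ∀ u v : V, φ u v = none ↔ u = v)
    (hΦ : IsChromaticClustering Φ)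
    (β : ℝ) (hβ : β = 1 / 10)
    (C : V → Finset V)
    (hC : ∀ u : V, C u = Finset.univ.filter fun v : V => Φ u v ≠ some none)
    (bad : V → Prop)
    (hbad : ∀ u : V, bad u ↔
      ((Finset.univ.filter fun v : V => φ u v ≠ Φ u v).card : ℝ) > β / 2 * (C u).card)
    (badC : V → Prop)
    (hbadC : ∀ u : V, badC u ↔
      ((((C u).filter fun w : V => bad w).card : ℝ) ≥ β / 3 * (C u).card))
    (Φp : V → V → Option (Option L))
    (hΦp : ∀ u v : V, Φp u v =
      if u = v then none
      else if bad u ∨ badC u ∨ bad v ∨ badC v then some none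
      else Φ u v)
    (Φstar : V → V → Option (Option L))
    (hΦstar : IsChromaticClustering Φstar)
    (hopt : ∀ Ψ : V → V → Option (Option L),
      IsChromaticClustering Ψ → objCCC φ Φstar ≤ objCCC φ Ψ) :
    ∀ u v : V, leColor (Φstar u v) (Φp u v) := by
  classical
  intro u v
  rw [hΦp u v]
  by_cases huv : u = v
  · rw [if_pos huv]
    exact Or.inl ((hΦstar.2.1 u v).2 huv)
  · rw [if_neg huv]
    by_cases hbadcase : bad u ∨ badC u ∨ bad v ∨ badC v
    · rw [if_pos hbadcase]
      exact Or.inr (Or.inl rfl)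
    · rw [if_neg hbadcase]
      push_neg at hbadcase
      obtain ⟨hgu, hgCu, hgv, hgCv⟩ := hbadcase
      cases hval : Φ u v with
      | none => exact absurd ((hΦ.2.1 u v).1 hval) huv
      | some o =>
        cases o with
        | none => exact Or.inr (Or.inl rfl)
        | some c =>
          refine Or.inr (Or.inr ?_)
          exact CCCProof.main_hard φ Φ hφsymm hφdiag hΦ β hβ C hC bad hbad badC hbadC
            Φstar hΦstar hopt u v c huv hval hgu hgCu hgv
end

section
/- Let A and B be finite subsets of ℕ, let S ⊆ ℕ be an arbitrary subset (the indices of a fixed color), and let m ∈ ℕ with m ≤ min(|A|, |B|). Let A' be the set of the m smallest elements of A and B' the set of the m smallest elements of B (i.e., each set is truncated by repeatedly removing its largest element until it has size m). Then |A' \ (A' ∩ B' ∩ S)| ≤ max( |A \ (A ∩ B ∩ S)|, |B \ (A ∩ B ∩ S)| ). -/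
/-!
Write `G = A ∩ B ∩ S` and `F = A' ∩ B' ∩ S`. Since `A'` and `B'` are initial segments of `A` and
`B`, the elements of `A ∩ B` that miss `A' ∩ B'` either all miss `A'` or all miss `B'`: an
`x ∈ A' \ B'` and a `y ∈ B' \ A'` in `A ∩ B` would give `x < y < x`. In the first case
`A' \ F ⊆ A \ G`; in the second `B' \ F ⊆ B \ G`, and `|A' \ F| = |B' \ F|` because
`|A'| = |B'|`.
-/

open Finset

namespace Finset

variable {α : Type*} [DecidableEq α]

theorem sdiff_subset_sdiff_of_sdiff_subset {s s' f g : Finset α} (hs' : s' ⊆ s)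
    (h : g \ f ⊆ s \ s') : s' \ f ⊆ s \ g := by
  intro x hx
  obtain ⟨hxs', hxf⟩ := mem_sdiff.1 hx
  refine mem_sdiff.2 ⟨hs' hxs', fun hxg => ?_⟩
  exact (mem_sdiff.1 (h (mem_sdiff.2 ⟨hxg, hxf⟩))).2 hxs'

theorem inter_sdiff_inter_subset_or [LinearOrder α] {s s' t t' : Finset α}
    (hs' : ∀ a ∈ s', ∀ b ∈ s, b ∉ s' → a < b) (ht' : ∀ a ∈ t', ∀ b ∈ t, b ∉ t' → a < b) :
    (s ∩ t) \ (s' ∩ t') ⊆ s \ s' ∨ (s ∩ t) \ (s' ∩ t') ⊆ t \ t' := by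
  by_contra! ⟨hs, ht⟩
  obtain ⟨x, hx, hxs⟩ := not_subset.1 hs
  obtain ⟨y, hy, hyt⟩ := not_subset.1 ht
  simp only [mem_sdiff, mem_inter, not_and, not_not] at hx hy hxs hyt
  have hxs' : x ∈ s' := hxs hx.1.1
  have hyt' : y ∈ t' := hyt hy.1.2
  exact lt_asymm (hs' x hxs' y hy.1.1 fun hys' => hy.2 hys' hyt')
    (ht' y hyt' x hx.1.2 fun hxt' => hx.2 hxs' hxt')

theorem filter_sdiff_filter_subset (p : α → Prop) [DecidablePred p] (s t : Finset α) :
    s.filter p \ t.filter p ⊆ s \ t := by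
  intro x hx
  simp only [mem_sdiff, mem_filter, not_and] at hx ⊢
  exact ⟨hx.1.1, fun hxt => hx.2 hxt hx.1.2⟩

end Finset

open scoped Classical

theorem truncation_disagreement_bound_general (A B A' B' : Finset ℕ) (S : Set ℕ) (m : ℕ)
    (hA'sub : A' ⊆ A) (hA'card : A'.card = m)
    (hA'min : ∀ a ∈ A', ∀ b ∈ A, b ∉ A' → a < b)
    (hB'sub : B' ⊆ B) (hB'card : B'.card = m)
    (hB'min : ∀ a ∈ B', ∀ b ∈ B, b ∉ B' → a < b) :
    (A' \ ((A' ∩ B').filter fun x => x ∈ S)).card ≤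
      max ((A \ ((A ∩ B).filter fun x => x ∈ S)).card)
        ((B \ ((A ∩ B).filter fun x => x ∈ S)).card) := by
  set G := (A ∩ B).filter fun x => x ∈ S
  set F := (A' ∩ B').filter fun x => x ∈ S
  have hGF : G \ F ⊆ (A ∩ B) \ (A' ∩ B') := filter_sdiff_filter_subset _ _ _
  have hcard : (A' \ F).card = (B' \ F).card := by
    rw [card_sdiff_of_subset (filter_subset _ _ |>.trans inter_subset_left),
      card_sdiff_of_subset (filter_subset _ _ |>.trans inter_subset_right), hA'card, hB'card]
  rcases inter_sdiff_inter_subset_or hA'min hB'min with hA | hB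
  · exact (card_le_card (sdiff_subset_sdiff_of_sdiff_subset hA'sub (hGF.trans hA))).trans
      (le_max_left _ _)
  · rw [hcard]
    exact (card_le_card (sdiff_subset_sdiff_of_sdiff_subset hB'sub (hGF.trans hB))).trans
      (le_max_right _ _)

/-- truncation step of the removal process. Let `A', B'` consist of the `m`
smallest elements of the finite sets `A, B ⊆ ℕ` respectively (characterized by being
subsets of size `m` all of whose elements are smaller than every discarded element), and
let `S ⊆ ℕ` be an arbitrary set (the indices of a fixed color). Then
`|A' \ (A' ∩ B' ∩ S)| ≤ max(|A \ (A ∩ B ∩ S)|, |B \ (A ∩ B ∩ S)|)`. -/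
theorem truncation_disagreement_bound (A B A' B' : Finset ℕ) (S : Set ℕ) (m : ℕ)
    (hmA : m ≤ A.card) (hmB : m ≤ B.card)
    (hA'sub : A' ⊆ A) (hA'card : A'.card = m)
    (hA'min : ∀ a ∈ A', ∀ b ∈ A, b ∉ A' → a < b)
    (hB'sub : B' ⊆ B) (hB'card : B'.card = m)
    (hB'min : ∀ a ∈ B', ∀ b ∈ B, b ∉ B' → a < b) :
    (A' \ ((A' ∩ B').filter fun x => x ∈ S)).card ≤
      max ((A \ ((A ∩ B).filter fun x => x ∈ S)).card)
        ((B \ ((A ∩ B).filter fun x => x ∈ S)).card) :=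
  truncation_disagreement_bound_general A B A' B' S m hA'sub hA'card hA'min hB'sub hB'card hB'min
end
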